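/- arXiv:2010.08821 — 9 statements merged into one kernel-verified Lean document; each statement's English description precedes it below -/
import Mathlib

section
/- (Leftover hash lemma.) Let X and Y be finite nonempty sets and let H be a universal family of hash functions from X to Y. Set β := (|Y|/|X|)^{1/4}. Then the probability, over a uniformly random h ∈ H, that Δ(h(U_X), U_Y) ≥ β is at most β. Here h(U_X) denotes the distribution of h(x) for x uniform in X, and U_Y is the uniform distribution on Y. -/
open scoped Classical

/-- Statistical distance between two distributions (given by their probability mass
functions) on a finite set. -/
noncomputable def statDist {S : Type*} [Fintype S] (p q : S → ℝ) : ℝ :=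
  ∑ z, |p z - q z|

open Finset

lemma fiber_sq_sum {X Y : Type*} [Fintype X] [Fintype Y] (h : X → Y) :
    ∑ y : Y, ((Finset.univ.filter (fun x : X => h x = y)).card : ℝ) ^ 2
      = ((Finset.univ.filter (fun p : X × X => h p.1 = h p.2)).card : ℝ) := by
  have key : (Finset.univ.filter (fun p : X × X => h p.1 = h p.2)).card
      = ∑ y : Y, (Finset.univ.filter (fun x : X => h x = y)).card ^ 2 := by
    rw [Finset.card_filter]
    rw [Fintype.sum_prod_type]
    have : ∀ x : X, (∑ x' : X, if h x = h x' then 1 else 0)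
        = (Finset.univ.filter (fun x' : X => h x' = h x)).card := by
      intro x
      rw [Finset.card_filter]
      congr 1; ext x'; simp [eq_comm]
    simp_rw [this]
    rw [← Finset.sum_fiberwise (Finset.univ : Finset X) h
      (fun x => (Finset.univ.filter (fun x' : X => h x' = h x)).card)]
    apply Finset.sum_congr rfl
    intro y _
    rw [sq, ← smul_eq_mul, ← Finset.sum_const]
    apply Finset.sum_congr rfl
    intro x hx
    simp only [Finset.mem_filter] at hx
    simp [hx.2]
  rw [key]
  push_cast
  rfl

lemma fiber_card_sum {X Y : Type*} [Fintype X] [Fintype Y] (h : X → Y) :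
    ∑ y : Y, ((Finset.univ.filter (fun x : X => h x = y)).card : ℝ)
      = (Fintype.card X : ℝ) := by
  have := Finset.card_eq_sum_card_fiberwise (f := h) (s := (Finset.univ : Finset X))
    (t := (Finset.univ : Finset Y)) (fun x _ => Finset.mem_univ _)
  have : Fintype.card X = ∑ y : Y, (Finset.univ.filter (fun x : X => h x = y)).card := this
  rw [this]
  push_cast
  rfl

/-- Leftover hash lemma: if `H` is a universal family of hash functions from
a finite nonempty set `X` to a finite nonempty set `Y`, and `β := (|Y|/|X|)^{1/4}`, then the
probability over a uniformly random `h ∈ H` that `Δ(h(U_X), U_Y) ≥ β` is at most `β`. -/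
theorem stmt_1 {X Y : Type*} [Fintype X] [Fintype Y] [Nonempty X] [Nonempty Y]
    (H : Finset (X → Y)) (hH : H.Nonempty)
    (huniv : ∀ x x' : X, x ≠ x' →
      ((H.filter (fun h => h x = h x')).card : ℝ) / H.card ≤ 1 / Fintype.card Y) :
    ((H.filter (fun h =>
        ((Fintype.card Y : ℝ) / Fintype.card X) ^ ((1 : ℝ) / 4) ≤
          statDist
            (fun y => ((Finset.univ.filter (fun x : X => h x = y)).card : ℝ) / Fintype.card X)
            (fun _ => 1 / Fintype.card Y))).card : ℝ) / H.card ≤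
      ((Fintype.card Y : ℝ) / Fintype.card X) ^ ((1 : ℝ) / 4) := by
  have hn : (0:ℝ) < (Fintype.card X : ℝ) := by exact_mod_cast Fintype.card_pos
  have hm : (0:ℝ) < (Fintype.card Y : ℝ) := by exact_mod_cast Fintype.card_pos
  have hHc : (0:ℝ) < (H.card : ℝ) := by exact_mod_cast Finset.card_pos.mpr hH
  set n : ℝ := (Fintype.card X : ℝ)
  set m : ℝ := (Fintype.card Y : ℝ)
  set β : ℝ := (m / n) ^ ((1:ℝ)/4) with hβ_def
  have hβpos : 0 < β := Real.rpow_pos_of_pos (by positivity) _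
  have hβ4 : β ^ (4:ℕ) = m / n := by
    rw [hβ_def, ← Real.rpow_natCast (((m/n)) ^ ((1:ℝ)/4)) 4, ← Real.rpow_mul (by positivity)]
    norm_num
  set D : (X → Y) → ℝ := fun h => statDist
      (fun y => ((Finset.univ.filter (fun x : X => h x = y)).card : ℝ) / n)
      (fun _ => 1 / m) with hD_def
  -- pointwise bound
  have pointwise : ∀ h : X → Y,
      D h ^ 2 ≤ m * ((Finset.univ.filter (fun p : X × X => h p.1 = h p.2)).card : ℝ) / n ^ 2 - 1 := by
    intro h
    set p : Y → ℝ := fun y => ((Finset.univ.filter (fun x : X => h x = y)).card : ℝ) / n with hp_def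
    have hsum : ∑ y, p y = 1 := by
      rw [hp_def, ← Finset.sum_div, fiber_card_sum h, div_self hn.ne']
    have cs : D h ^ 2 ≤ m * ∑ y, (p y - 1/m) ^ 2 := by
      have := sq_sum_le_card_mul_sum_sq (s := (Finset.univ : Finset Y))
        (f := fun y => |p y - 1/m|)
      simp only [Finset.card_univ, sq_abs] at this
      calc D h ^ 2 = (∑ y, |p y - 1/m|) ^ 2 := rfl
        _ ≤ (Fintype.card Y : ℝ) * ∑ y, (p y - 1/m) ^ 2 := this
        _ = m * ∑ y, (p y - 1/m) ^ 2 := rfl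
    have expand : ∑ y, (p y - 1/m) ^ 2 = (∑ y, p y ^ 2) - 1/m := by
      have : ∀ y, (p y - 1/m) ^ 2 = p y ^ 2 - (2/m) * p y + 1/m^2 := by
        intro y; ring
      rw [Finset.sum_congr rfl (fun y _ => this y), Finset.sum_add_distrib,
        Finset.sum_sub_distrib, ← Finset.mul_sum, hsum, Finset.sum_const,
        Finset.card_univ, nsmul_eq_mul]
      have hmm : (Fintype.card Y : ℝ) * (1/m^2) = 1/m := by
        show m * (1/m^2) = 1/m
        rw [one_div, one_div, sq]
        rw [mul_inv]
        rw [← mul_assoc, mul_inv_cancel₀ hm.ne', one_mul]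
      rw [hmm]; ring
    have psq : ∑ y, p y ^ 2
        = ((Finset.univ.filter (fun p : X × X => h p.1 = h p.2)).card : ℝ) / n ^ 2 := by
      rw [← fiber_sq_sum h, Finset.sum_div]
      apply Finset.sum_congr rfl
      intro y _
      rw [hp_def, div_pow]
    calc D h ^ 2 ≤ m * ∑ y, (p y - 1/m) ^ 2 := cs
      _ = m * ((∑ y, p y ^ 2) - 1/m) := by rw [expand]
      _ = m * (∑ y, p y ^ 2) - 1 := by rw [mul_sub, mul_one_div, div_self hm.ne']
      _ = m * ((Finset.univ.filter (fun p : X × X => h p.1 = h p.2)).card : ℝ) / n ^ 2 - 1 := by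
          rw [psq]; ring
  -- double counting
  have count : ∑ h ∈ H, ((Finset.univ.filter (fun p : X × X => h p.1 = h p.2)).card : ℝ)
      ≤ n * H.card + n ^ 2 * H.card / m := by
    have swap : ∑ h ∈ H, ((Finset.univ.filter (fun p : X × X => h p.1 = h p.2)).card : ℝ)
        = ∑ q : X × X, ((H.filter (fun h => h q.1 = h q.2)).card : ℝ) := by
      simp only [Finset.card_filter]
      push_cast
      rw [Finset.sum_comm]
    rw [swap]
    have bound : ∀ q : X × X,
        ((H.filter (fun h => h q.1 = h q.2)).card : ℝ)
          ≤ if q.1 = q.2 then (H.card : ℝ) else (H.card : ℝ) / m := by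
      intro q
      by_cases hq : q.1 = q.2
      · simp only [hq, if_pos]
        exact_mod_cast Finset.card_le_card (Finset.filter_subset _ _)
      · simp only [hq, if_false]
        have h1 := huniv q.1 q.2 hq
        rw [div_le_div_iff₀ hHc hm] at h1
        rw [le_div_iff₀ hm]
        linarith
    calc ∑ q : X × X, ((H.filter (fun h => h q.1 = h q.2)).card : ℝ)
        ≤ ∑ q : X × X, (if q.1 = q.2 then (H.card : ℝ) else (H.card : ℝ) / m) :=
          Finset.sum_le_sum (fun q _ => bound q)
      _ ≤ n * H.card + n ^ 2 * H.card / m := by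
          rw [Finset.sum_ite, Finset.sum_const, Finset.sum_const]
          have hdiag : ((Finset.univ.filter (fun q : X × X => q.1 = q.2)).card : ℕ)
              = Fintype.card X := by
            rw [Finset.card_filter, Fintype.sum_prod_type]
            simp
          have hoff : ((Finset.univ.filter (fun q : X × X => ¬ q.1 = q.2)).card : ℝ)
              ≤ n ^ 2 := by
            have : (Finset.univ.filter (fun q : X × X => ¬ q.1 = q.2)).card
                ≤ Fintype.card (X × X) := by
              simpa using Finset.card_le_card
                (Finset.filter_subset (fun q : X × X => ¬ q.1 = q.2) Finset.univ)
            calc ((Finset.univ.filter (fun q : X × X => ¬ q.1 = q.2)).card : ℝ)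
                ≤ (Fintype.card (X × X) : ℝ) := by exact_mod_cast this
              _ = n ^ 2 := by rw [Fintype.card_prod]; push_cast; ring
          rw [nsmul_eq_mul, nsmul_eq_mul, hdiag]
          have h2 : ((Finset.univ.filter (fun q : X × X => ¬ q.1 = q.2)).card : ℝ)
              * ((H.card : ℝ) / m) ≤ n ^ 2 * ((H.card : ℝ) / m) := by
            apply mul_le_mul_of_nonneg_right hoff (by positivity)
          have : n * (H.card : ℝ) + n ^ 2 * ((H.card : ℝ) / m)
              = n * H.card + n ^ 2 * H.card / m := by ring
          linarith
  -- sum of squared distances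
  have total : ∑ h ∈ H, D h ^ 2 ≤ (m / n) * H.card := by
    calc ∑ h ∈ H, D h ^ 2
        ≤ ∑ h ∈ H, (m * ((Finset.univ.filter (fun p : X × X => h p.1 = h p.2)).card : ℝ)
            / n ^ 2 - 1) := Finset.sum_le_sum (fun h _ => pointwise h)
      _ = (m / n ^ 2) * (∑ h ∈ H, ((Finset.univ.filter (fun p : X × X => h p.1 = h p.2)).card : ℝ))
          - H.card := by
          rw [Finset.sum_sub_distrib, Finset.sum_const, Finset.mul_sum, nsmul_eq_mul, mul_one]
          congr 1
          apply Finset.sum_congr rfl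
          intro h _
          ring
      _ ≤ (m / n ^ 2) * (n * H.card + n ^ 2 * H.card / m) - H.card := by
          have := mul_le_mul_of_nonneg_left count (le_of_lt (by positivity : (0:ℝ) < m / n ^ 2))
          linarith
      _ = (m / n) * H.card := by field_simp; ring
  -- Markov
  set A := H.filter (fun h => β ≤ D h) with hA_def
  have hAsub : A ⊆ H := Finset.filter_subset _ _
  have markov : (A.card : ℝ) * β ^ 2 ≤ (m / n) * H.card := by
    calc (A.card : ℝ) * β ^ 2 = ∑ _h ∈ A, β ^ 2 := by
          rw [Finset.sum_const, nsmul_eq_mul]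
      _ ≤ ∑ h ∈ A, D h ^ 2 := by
          apply Finset.sum_le_sum
          intro h hh
          have : β ≤ D h := (Finset.mem_filter.mp hh).2
          exact pow_le_pow_left₀ hβpos.le this 2
      _ ≤ ∑ h ∈ H, D h ^ 2 :=
          Finset.sum_le_sum_of_subset_of_nonneg hAsub (fun h _ _ => sq_nonneg _)
      _ ≤ (m / n) * H.card := total
  have hmn : m / n = β ^ 2 * β ^ 2 := by rw [← hβ4]; ring
  have key : (A.card : ℝ) / H.card ≤ β ^ 2 := by
    rw [div_le_iff₀ hHc]
    have : (A.card : ℝ) * β ^ 2 ≤ β ^ 2 * (β ^ 2 * H.card) := by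
      rw [hmn] at markov; linarith
    have h2 : (0:ℝ) < β ^ 2 := by positivity
    nlinarith
  show (A.card : ℝ) / H.card ≤ β
  rcases le_or_gt β 1 with hβ1 | hβ1
  · calc (A.card : ℝ) / H.card ≤ β ^ 2 := key
      _ ≤ β := by nlinarith
  · rw [div_le_iff₀ hHc]
    calc (A.card : ℝ) ≤ H.card := by exact_mod_cast Finset.card_le_card hAsub
      _ ≤ β * H.card := by nlinarith
end

section
/- For any integers Q ≥ 2 and m ≥ 1 and any nonempty subset X ⊆ {0,1}^m, setting β := (Q/|X|)^{1/4}, the probability over a uniformly random a ∈ (ℤ/Qℤ)^m that Δ(⟨a, U_X⟩ mod Q, U_{ℤ/Qℤ}) ≥ β is at most β. Here ⟨a, U_X⟩ mod Q denotes the distribution of Σ_i a_i x_i in ℤ/Qℤ for x chosen uniformly from X, and U_{ℤ/Qℤ} is the uniform distribution on ℤ/Qℤ. -/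
open scoped Classical

open Finset

section Aux

variable {Q m : ℕ} [NeZero Q]

/-- Sum after updating one coordinate. -/
lemma sum_update_mul (d : Fin m → ZMod Q) (a : Fin m → ZMod Q) (j : Fin m) (w : ZMod Q) :
    ∑ i, (Function.update a j w) i * d i = (∑ i, a i * d i) - a j * d j + w * d j := by
  have h1 : ∀ i, (Function.update a j w) i * d i
      = Function.update (fun i => a i * d i) j (w * d j) i := by
    intro i
    exact Function.apply_update (fun i x => x * d i) a j w i
  rw [Finset.sum_congr rfl (fun i _ => h1 i)]
  rw [Finset.sum_update_of_mem (mem_univ j)]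
  rw [Finset.sum_eq_add_sum_sdiff_singleton_of_mem (mem_univ j) (fun i => a i * d i)]
  ring

/-- All fibers of `a ↦ ∑ i, a i * d i` have the same cardinality, provided some `d j`
is a unit. -/
lemma fiber_card_eq (d : Fin m → ZMod Q) (j : Fin m) (hd : IsUnit (d j))
    (c₁ c₂ : ZMod Q) :
    ((univ : Finset (Fin m → ZMod Q)).filter (fun a => ∑ i, a i * d i = c₁)).card =
      ((univ : Finset (Fin m → ZMod Q)).filter (fun a => ∑ i, a i * d i = c₂)).card := by
  obtain ⟨v, hv⟩ := hd.exists_right_inv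
  have hv' : v * d j = 1 := by rw [mul_comm]; exact hv
  refine Finset.card_bij' (fun a _ => Function.update a j (a j + (c₂ - c₁) * v))
    (fun a _ => Function.update a j (a j + (c₁ - c₂) * v)) ?_ ?_ ?_ ?_
  · intro a ha
    simp only [mem_filter, mem_univ, true_and] at ha ⊢
    rw [sum_update_mul, ha]
    linear_combination (c₂ - c₁) * hv'
  · intro a ha
    simp only [mem_filter, mem_univ, true_and] at ha ⊢
    rw [sum_update_mul, ha]
    linear_combination (c₁ - c₂) * hv'
  · intro a ha
    rw [Function.update_idem, Function.update_self]
    have : a j + (c₂ - c₁) * v + (c₁ - c₂) * v = a j := by ring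
    rw [this, Function.update_eq_self]
  · intro a ha
    rw [Function.update_idem, Function.update_self]
    have : a j + (c₁ - c₂) * v + (c₂ - c₁) * v = a j := by ring
    rw [this, Function.update_eq_self]

/-- Each fiber has exactly `Q^(m-1)` elements. -/
lemma fiber_card (hm : 1 ≤ m) (d : Fin m → ZMod Q) (j : Fin m) (hd : IsUnit (d j))
    (c : ZMod Q) :
    ((univ : Finset (Fin m → ZMod Q)).filter (fun a => ∑ i, a i * d i = c)).card
      = Q ^ (m - 1) := by
  have hQ0 : 0 < Q := Nat.pos_of_ne_zero (NeZero.ne Q)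
  have hKsum : (univ : Finset (Fin m → ZMod Q)).card =
      ∑ c' : ZMod Q, ((univ : Finset (Fin m → ZMod Q)).filter
        (fun a => ∑ i, a i * d i = c')).card :=
    Finset.card_eq_sum_card_fiberwise (fun a _ => mem_univ _)
  have hall : ∀ c' : ZMod Q,
      ((univ : Finset (Fin m → ZMod Q)).filter (fun a => ∑ i, a i * d i = c')).card =
      ((univ : Finset (Fin m → ZMod Q)).filter (fun a => ∑ i, a i * d i = c)).card :=
    fun c' => fiber_card_eq d j hd c' c
  have hKcard : (univ : Finset (Fin m → ZMod Q)).card = Q ^ m := by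
    simp [Fintype.card_fun, ZMod.card]
  have hz : (univ : Finset (ZMod Q)).card = Q := by rw [Finset.card_univ, ZMod.card]
  rw [Finset.sum_congr rfl (fun c' _ => hall c'), Finset.sum_const, smul_eq_mul,
    hKcard, hz] at hKsum
  have hm' : Q ^ m = Q * Q ^ (m - 1) := by
    conv_lhs => rw [← Nat.succ_pred_eq_of_pos hm]
    rw [pow_succ, mul_comm, Nat.sub_one]
  rw [hm'] at hKsum
  exact (Nat.eq_of_mul_eq_mul_left hQ0 hKsum.symm)

/-- The number of `a` with `⟨a,x⟩ = ⟨a,y⟩`. -/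
lemma pair_count (hm : 1 ≤ m) (x y : Fin m → Bool) :
    ((univ : Finset (Fin m → ZMod Q)).filter
        (fun a => (∑ i, a i * (if x i then 1 else 0)) =
          ∑ i, a i * (if y i then (1 : ZMod Q) else 0))).card
      = if x = y then Q ^ m else Q ^ (m - 1) := by
  by_cases hxy : x = y
  · subst hxy
    simp [Fintype.card_fun, ZMod.card]
  · rw [if_neg hxy]
    obtain ⟨j, hj⟩ := Function.ne_iff.mp hxy
    set d : Fin m → ZMod Q :=
      fun i => (if x i then 1 else 0) - (if y i then 1 else 0) with hd
    have hpred : ∀ a : Fin m → ZMod Q,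
        ((∑ i, a i * (if x i then 1 else 0)) =
          ∑ i, a i * (if y i then (1 : ZMod Q) else 0)) ↔ (∑ i, a i * d i = 0) := by
      intro a
      rw [hd]
      simp only [mul_sub]
      rw [Finset.sum_sub_distrib, sub_eq_zero]
    have hdj : IsUnit (d j) := by
      rw [hd]
      rcases Bool.eq_false_or_eq_true (x j) with h1 | h1 <;>
        rcases Bool.eq_false_or_eq_true (y j) with h2 | h2 <;>
          simp [h1, h2] at hj ⊢ <;>
        first
          | exact (isUnit_one (M := ZMod Q)).neg
          | exact isUnit_one (M := ZMod Q)
    rw [Finset.filter_congr (fun a _ => by rw [hpred a])]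
    exact fiber_card hm d j hdj 0

/-- Key double-counting bound, in the naturals. -/
lemma count_sum_sq_le (hm : 1 ≤ m) (X : Finset (Fin m → Bool)) :
    ∑ a : Fin m → ZMod Q, ∑ c : ZMod Q,
        ((X.filter (fun x => (∑ i, a i * (if x i then 1 else 0)) = c)).card) ^ 2
      ≤ X.card * Q ^ m + X.card ^ 2 * Q ^ (m - 1) := by
  have step1 : ∀ (a : Fin m → ZMod Q),
      ∑ c : ZMod Q,
        ((X.filter (fun x => (∑ i, a i * (if x i then 1 else 0)) = c)).card) ^ 2
      = ∑ x ∈ X, ∑ y ∈ X,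
          (if (∑ i, a i * (if y i then (1 : ZMod Q) else 0)) =
              (∑ i, a i * (if x i then 1 else 0)) then 1 else 0) := by
    intro a
    have hc : ∀ c : ZMod Q,
        ((X.filter (fun x => (∑ i, a i * (if x i then 1 else 0)) = c)).card)
          = ∑ x ∈ X, (if (∑ i, a i * (if x i then (1 : ZMod Q) else 0)) = c then 1 else 0) := by
      intro c; rw [Finset.card_filter]
    calc ∑ c : ZMod Q,
        ((X.filter (fun x => (∑ i, a i * (if x i then 1 else 0)) = c)).card) ^ 2
        = ∑ c : ZMod Q, ∑ x ∈ X, ∑ y ∈ X,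
            (if (∑ i, a i * (if x i then (1 : ZMod Q) else 0)) = c then 1 else 0) *
            (if (∑ i, a i * (if y i then (1 : ZMod Q) else 0)) = c then 1 else 0) := by
          refine Finset.sum_congr rfl fun c _ => ?_
          rw [hc c, sq, Finset.sum_mul_sum]
      _ = ∑ x ∈ X, ∑ y ∈ X, ∑ c : ZMod Q,
            (if (∑ i, a i * (if x i then (1 : ZMod Q) else 0)) = c then
              (if (∑ i, a i * (if y i then (1 : ZMod Q) else 0)) = c then 1 else 0) else 0) := by
          rw [Finset.sum_comm]
          refine Finset.sum_congr rfl fun x _ => ?_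
          rw [Finset.sum_comm]
          refine Finset.sum_congr rfl fun y _ => ?_
          refine Finset.sum_congr rfl fun c _ => ?_
          rw [ite_mul, zero_mul, one_mul]
      _ = ∑ x ∈ X, ∑ y ∈ X,
            (if (∑ i, a i * (if y i then (1 : ZMod Q) else 0)) =
                (∑ i, a i * (if x i then 1 else 0)) then 1 else 0) := by
          refine Finset.sum_congr rfl fun x _ => Finset.sum_congr rfl fun y _ => ?_
          rw [Finset.sum_ite_eq]
          simp
  calc ∑ a : Fin m → ZMod Q, ∑ c : ZMod Q,
        ((X.filter (fun x => (∑ i, a i * (if x i then 1 else 0)) = c)).card) ^ 2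
      = ∑ a : Fin m → ZMod Q, ∑ x ∈ X, ∑ y ∈ X,
          (if (∑ i, a i * (if y i then (1 : ZMod Q) else 0)) =
              (∑ i, a i * (if x i then 1 else 0)) then 1 else 0) :=
        Finset.sum_congr rfl fun a _ => step1 a
    _ = ∑ x ∈ X, ∑ y ∈ X, ∑ a : Fin m → ZMod Q,
          (if (∑ i, a i * (if y i then (1 : ZMod Q) else 0)) =
              (∑ i, a i * (if x i then 1 else 0)) then 1 else 0) := by
        rw [Finset.sum_comm]
        exact Finset.sum_congr rfl fun x _ => Finset.sum_comm
    _ = ∑ x ∈ X, ∑ y ∈ X, (if y = x then Q ^ m else Q ^ (m - 1)) := by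
        refine Finset.sum_congr rfl fun x hx => Finset.sum_congr rfl fun y hy => ?_
        rw [← pair_count hm y x, Finset.card_filter]
    _ ≤ ∑ x ∈ X, ∑ y ∈ X, (Q ^ (m - 1) + if y = x then Q ^ m else 0) := by
        refine Finset.sum_le_sum fun x _ => Finset.sum_le_sum fun y _ => ?_
        by_cases h : y = x <;> simp [h, Nat.le_add_left, Nat.pow_le_pow_right,
          Nat.pos_of_ne_zero (NeZero.ne Q)]
    _ = X.card ^ 2 * Q ^ (m - 1) + X.card * Q ^ m := by
        rw [Finset.sum_congr rfl (fun x hx => Finset.sum_add_distrib)]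
        rw [Finset.sum_add_distrib]
        congr 1
        · rw [Finset.sum_congr rfl (fun x _ => Finset.sum_const _), Finset.sum_const]
          simp [sq]; ring
        · rw [Finset.sum_congr rfl (fun x hx => Finset.sum_ite_eq' X x (fun _ => Q ^ m))]
          rw [Finset.sum_congr rfl (fun x hx => if_pos hx), Finset.sum_const]
          simp [mul_comm]
    _ = X.card * Q ^ m + X.card ^ 2 * Q ^ (m - 1) := by ring

end Aux

/-- For `Q ≥ 2`, `m ≥ 1`, and any nonempty `X ⊆ {0,1}^m`, with
`β := (Q/|X|)^{1/4}`, the probability over a uniformly random `a ∈ (ℤ/Qℤ)^m` that the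
distribution of `⟨a, x⟩ mod Q` (for `x` uniform in `X`) is at statistical distance at least
`β` from uniform on `ℤ/Qℤ` is at most `β`. -/
theorem stmt_2 (Q m : ℕ) [NeZero Q] (hQ : 2 ≤ Q) (hm : 1 ≤ m)
    (X : Finset (Fin m → Bool)) (hX : X.Nonempty) :
    ((Finset.univ.filter (fun a : Fin m → ZMod Q =>
        ((Q : ℝ) / X.card) ^ ((1 : ℝ) / 4) ≤
          statDist
            (fun c : ZMod Q =>
              ((X.filter (fun x => ∑ i, a i * (if x i then 1 else 0) = c)).card : ℝ) / X.card)
            (fun _ => 1 / Q))).card : ℝ) / Fintype.card (Fin m → ZMod Q) ≤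
      ((Q : ℝ) / X.card) ^ ((1 : ℝ) / 4) := by
  classical
  have hQ0 : (0 : ℝ) < Q := by
    have : (0 : ℕ) < Q := by omega
    exact_mod_cast this
  have hQne : (Q : ℝ) ≠ 0 := ne_of_gt hQ0
  have hN0 : (0 : ℝ) < X.card := by exact_mod_cast hX.card_pos
  have hNne : (X.card : ℝ) ≠ 0 := ne_of_gt hN0
  have ht0 : (0 : ℝ) < (Q : ℝ) / X.card := div_pos hQ0 hN0
  set β : ℝ := ((Q : ℝ) / X.card) ^ ((1 : ℝ) / 4) with hβ
  have hβ0 : 0 < β := Real.rpow_pos_of_pos ht0 _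
  have hβ4 : β ^ (4 : ℕ) = (Q : ℝ) / X.card := by
    rw [hβ, ← Real.rpow_natCast (((Q : ℝ) / X.card) ^ ((1 : ℝ) / 4)) 4,
      ← Real.rpow_mul ht0.le]
    norm_num
  have hK : ((Fintype.card (Fin m → ZMod Q) : ℕ) : ℝ) = (Q : ℝ) ^ m := by
    rw [Fintype.card_fun, Fintype.card_fin, ZMod.card]
    push_cast
    ring
  have hKpos : (0 : ℝ) < (Q : ℝ) ^ m := by positivity
  have hz : (Finset.univ : Finset (ZMod Q)).card = Q := by
    rw [Finset.card_univ, ZMod.card]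
  -- notation
  set cnt : (Fin m → ZMod Q) → ZMod Q → ℕ :=
    fun a c => (X.filter (fun x => ∑ i, a i * (if x i then 1 else 0) = c)).card with hcnt
  set D : (Fin m → ZMod Q) → ℝ := fun a =>
    statDist
      (fun c : ZMod Q => ((cnt a c : ℝ)) / X.card)
      (fun _ => 1 / Q) with hD
  have hDdef : ∀ a, D a = ∑ c : ZMod Q, |(cnt a c : ℝ) / X.card - 1 / Q| := fun a => rfl
  have hD0 : ∀ a, 0 ≤ D a := by
    intro a
    rw [hDdef]
    exact Finset.sum_nonneg fun c _ => abs_nonneg _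
  -- counts sum to |X|
  have hsum1 : ∀ a, ∑ c : ZMod Q, ((cnt a c : ℝ)) = X.card := by
    intro a
    have h := Finset.card_eq_sum_card_fiberwise
      (f := fun x : Fin m → Bool => ∑ i, a i * (if x i then (1 : ZMod Q) else 0))
      (s := X) (t := Finset.univ) (fun x _ => Finset.mem_univ _)
    rw [hcnt]
    exact_mod_cast h.symm
  have hp1 : ∀ a, ∑ c : ZMod Q, (cnt a c : ℝ) / X.card = 1 := by
    intro a
    rw [← Finset.sum_div, hsum1 a, div_self hNne]
  -- Cauchy–Schwarz + expansion
  have hD2 : ∀ a, D a ^ 2 ≤ (Q : ℝ) * (∑ c : ZMod Q, ((cnt a c : ℝ) / X.card) ^ 2) - 1 := by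
    intro a
    have hcs := sq_sum_le_card_mul_sum_sq
      (s := (Finset.univ : Finset (ZMod Q)))
      (f := fun c => |(cnt a c : ℝ) / X.card - 1 / Q|)
    rw [hz] at hcs
    have habs : ∑ c : ZMod Q, |(cnt a c : ℝ) / X.card - 1 / Q| ^ 2
        = ∑ c : ZMod Q, ((cnt a c : ℝ) / X.card - 1 / Q) ^ 2 :=
      Finset.sum_congr rfl fun c _ => sq_abs _
    have hexp : ∑ c : ZMod Q, ((cnt a c : ℝ) / X.card - 1 / Q) ^ 2
        = (∑ c : ZMod Q, ((cnt a c : ℝ) / X.card) ^ 2) - 1 / Q := by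
      have h1 : ∀ c : ZMod Q, ((cnt a c : ℝ) / X.card - 1 / Q) ^ 2
          = ((cnt a c : ℝ) / X.card) ^ 2
            - (2 / Q) * ((cnt a c : ℝ) / X.card) + 1 / Q ^ 2 := fun c => by ring
      rw [Finset.sum_congr rfl fun c _ => h1 c, Finset.sum_add_distrib,
        Finset.sum_sub_distrib, ← Finset.mul_sum, hp1 a, Finset.sum_const, hz,
        nsmul_eq_mul]
      field_simp
      ring
    calc D a ^ 2 = (∑ c : ZMod Q, |(cnt a c : ℝ) / X.card - 1 / Q|) ^ 2 := by rw [hDdef]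
      _ ≤ (Q : ℝ) * ∑ c : ZMod Q, |(cnt a c : ℝ) / X.card - 1 / Q| ^ 2 := by
          exact_mod_cast hcs
      _ = (Q : ℝ) * ((∑ c : ZMod Q, ((cnt a c : ℝ) / X.card) ^ 2) - 1 / Q) := by
          rw [habs, hexp]
      _ = (Q : ℝ) * (∑ c : ZMod Q, ((cnt a c : ℝ) / X.card) ^ 2) - 1 := by
          field_simp
  -- double counting bound, cast to ℝ
  have hqm1 : (Q : ℝ) ^ (m - 1) * Q = (Q : ℝ) ^ m := by
    rw [← pow_succ, Nat.sub_add_cancel hm]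
  have hcount : ∑ a : Fin m → ZMod Q, ∑ c : ZMod Q, ((cnt a c : ℝ)) ^ 2
      ≤ (X.card : ℝ) * (Q : ℝ) ^ m + (X.card : ℝ) ^ 2 * (Q : ℝ) ^ (m - 1) := by
    have h := count_sum_sq_le (Q := Q) hm X
    rw [hcnt]
    exact_mod_cast h
  -- total second moment bound
  have htotal : ∑ a : Fin m → ZMod Q, D a ^ 2 ≤ (Q : ℝ) ^ m * Q / X.card := by
    have hcard_a : ((Finset.univ : Finset (Fin m → ZMod Q)).card : ℝ) = (Q : ℝ) ^ m := by
      rw [Finset.card_univ]; exact hK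
    calc ∑ a : Fin m → ZMod Q, D a ^ 2
        ≤ ∑ a : Fin m → ZMod Q,
            ((Q : ℝ) * (∑ c : ZMod Q, ((cnt a c : ℝ) / X.card) ^ 2) - 1) :=
          Finset.sum_le_sum fun a _ => hD2 a
      _ = (Q : ℝ) * (∑ a : Fin m → ZMod Q, ∑ c : ZMod Q, ((cnt a c : ℝ)) ^ 2) / X.card ^ 2
            - (Q : ℝ) ^ m := by
          rw [Finset.sum_sub_distrib, Finset.sum_const, ← Finset.mul_sum, nsmul_eq_mul,
            mul_one, hcard_a]
          congr 1
          rw [mul_div_assoc, Finset.sum_div]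
          congr 1
          refine Finset.sum_congr rfl fun a _ => ?_
          rw [Finset.sum_div]
          refine Finset.sum_congr rfl fun c _ => ?_
          rw [div_pow]
      _ ≤ (Q : ℝ) * ((X.card : ℝ) * (Q : ℝ) ^ m + (X.card : ℝ) ^ 2 * (Q : ℝ) ^ (m - 1))
            / X.card ^ 2 - (Q : ℝ) ^ m := by
          have h2 : (0 : ℝ) < (X.card : ℝ) ^ 2 := by positivity
          gcongr
      _ = (Q : ℝ) ^ m * Q / X.card := by
          rw [← hqm1]
          field_simp
          ring
  -- Markov
  set T : Finset (Fin m → ZMod Q) := Finset.univ.filter (fun a : Fin m → ZMod Q =>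
      β ≤ statDist
        (fun c : ZMod Q => ((cnt a c : ℝ)) / X.card)
        (fun _ => 1 / Q)) with hT
  have hmem : ∀ a ∈ T, β ≤ D a := by
    intro a ha
    rw [hT, Finset.mem_filter] at ha
    exact ha.2
  have hmark : (T.card : ℝ) * β ^ 2 ≤ (Q : ℝ) ^ m * Q / X.card := by
    calc (T.card : ℝ) * β ^ 2 = ∑ _a ∈ T, β ^ 2 := by rw [Finset.sum_const, nsmul_eq_mul]
      _ ≤ ∑ a ∈ T, D a ^ 2 :=
          Finset.sum_le_sum fun a ha => pow_le_pow_left₀ hβ0.le (hmem a ha) 2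
      _ ≤ ∑ a : Fin m → ZMod Q, D a ^ 2 :=
          Finset.sum_le_sum_of_subset_of_nonneg (Finset.subset_univ T)
            (fun a _ _ => sq_nonneg _)
      _ ≤ (Q : ℝ) ^ m * Q / X.card := htotal
  have hQN : (Q : ℝ) ^ m * Q / X.card = (Q : ℝ) ^ m * β ^ 4 := by
    rw [hβ4, mul_div_assoc]
  have hβ2 : (0 : ℝ) < β ^ 2 := by positivity
  have hTle : (T.card : ℝ) ≤ (Q : ℝ) ^ m * β ^ 2 := by
    have h := hmark
    rw [hQN] at h
    have h4 : (Q : ℝ) ^ m * β ^ 4 = ((Q : ℝ) ^ m * β ^ 2) * β ^ 2 := by ring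
    rw [h4] at h
    exact le_of_mul_le_mul_right h hβ2
  -- conclude
  show (T.card : ℝ) / (Fintype.card (Fin m → ZMod Q) : ℕ) ≤ β
  rw [hK, div_le_iff₀ hKpos]
  by_cases hβ1 : β ≤ 1
  · calc (T.card : ℝ) ≤ (Q : ℝ) ^ m * β ^ 2 := hTle
      _ ≤ (Q : ℝ) ^ m * β := by
          have : β ^ 2 ≤ β := by
            calc β ^ 2 = β * β := sq β
              _ ≤ 1 * β := by gcongr
              _ = β := one_mul β
          gcongr
      _ = β * (Q : ℝ) ^ m := by ring
  · push_neg at hβ1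
    calc (T.card : ℝ) ≤ (Q : ℝ) ^ m := by
          rw [← hK, ← Finset.card_univ]
          exact_mod_cast Finset.card_filter_le _ _
      _ = 1 * (Q : ℝ) ^ m := (one_mul _).symm
      _ ≤ β * (Q : ℝ) ^ m := by gcongr
end

section
/- Let Q ≥ 2, M, M', t be positive integers with t ≤ M. Let a = (a_1, …, a_M) be sampled uniformly at random from (ℤ/Qℤ)^M, and let S_1, …, S_{M'} ⊆ {1, …, M} be sampled independently and uniformly at random among all subsets of size exactly t. Define c_i := Σ_{j ∈ S_i} a_j mod Q for i = 1, …, M'. Then the joint distribution of (a_1, …, a_M, c_1, …, c_{M'}) is within statistical distance δ of the uniform distribution on (ℤ/Qℤ)^{M+M'}, where δ := (M' + 1) · Q^{1/4} · C(M, t)^{−1/4}; moreover δ ≤ (M' + 1) · (Q · t^t / M^t)^{1/4}. -/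
/-!
For fixed `a`, the `c_i` are i.i.d. with the law `p_a` of `∑_{j ∈ S} a_j`, `S` uniform. A hybrid
argument bounds the distance of `p_a^{⊗M'}` from uniform by `M'` times that of `p_a`, and
Cauchy–Schwarz bounds the average of the latter by `√(Q · 𝔼_a ∑_x (p_a(x) - 1/Q)²)`. The map
`a ↦ (S ↦ ∑_{j ∈ S} a_j)` is a universal hash family (for `S ≠ S'` the difference of the two sums
is a surjective homomorphism of `a`), so the collision probability `∑_x p_a(x)²` is on average at
most `1/C(M,t) + 1/Q`. This gives the distance bound `M' √(Q / C(M,t))`; together with the trivial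
bound `2` it is at most `(M'+1) (Q / C(M,t))^{1/4}`, and `C(M,t) ≥ (M/t)^t` gives the second part.
-/

open scoped Classical

open Finset

section Fibers
variable {β γ : Type*} [Fintype β] [DecidableEq γ]

theorem sum_card_fiber [Fintype γ] (F : β → γ) : ∑ z, #{ω | F ω = z} = Fintype.card β :=
  (card_eq_sum_card_fiberwise (f := F) (s := univ) (t := univ) (by simp)).symm

noncomputable def statDistToUniform [Fintype γ] (F : β → γ) : ℝ :=
  ∑ z, |(#{ω | F ω = z} : ℝ) / Fintype.card β - 1 / Fintype.card γ|

theorem statDistToUniform_le_two [Fintype γ] (F : β → γ) : statDistToUniform F ≤ 2 := by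
  have hmass : ∑ z, (#{ω | F ω = z} : ℝ) / Fintype.card β ≤ 1 := by
    rw [← sum_div, ← Nat.cast_sum, sum_card_fiber]
    exact div_self_le_one _
  have hunif : ∑ _z : γ, 1 / (Fintype.card γ : ℝ) ≤ 1 := by
    rw [sum_const, card_univ, nsmul_eq_mul, mul_one_div]
    exact div_self_le_one _
  calc statDistToUniform F
      ≤ ∑ z, ((#{ω | F ω = z} : ℝ) / Fintype.card β + 1 / Fintype.card γ) := by
        refine sum_le_sum fun z _ => (abs_sub _ _).trans_eq ?_
        rw [abs_of_nonneg (by positivity), abs_of_nonneg (by positivity)]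
    _ ≤ 2 := by rw [sum_add_distrib]; linarith

noncomputable def fiberProb (F : β → γ) (z : γ) : ℝ :=
  #{ω | F ω = z} / Fintype.card β

theorem fiberProb_nonneg (F : β → γ) (z : γ) : 0 ≤ fiberProb F z := by
  unfold fiberProb; positivity

theorem sum_fiberProb [Fintype γ] [Nonempty β] (F : β → γ) : ∑ z, fiberProb F z = 1 := by
  simp only [fiberProb]
  rw [← sum_div, ← Nat.cast_sum, sum_card_fiber]
  exact div_self (by positivity)

theorem sum_card_fiber_sq [Fintype γ] (F : β → γ) :
    ∑ z, #{ω | F ω = z} ^ 2 = ∑ ω, ∑ ω', if F ω = F ω' then 1 else 0 := by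
  simp only [sq, card_filter, sum_mul_sum, ite_mul, one_mul, zero_mul]
  rw [sum_comm]
  refine sum_congr rfl fun ω _ => ?_
  rw [sum_comm]
  simp [eq_comm]

end Fibers

section Inequalities
variable {ι : Type*} [Fintype ι]

theorem sum_abs_le_sqrt_card_mul_sum_sq (f : ι → ℝ) :
    ∑ i, |f i| ≤ √(Fintype.card ι * ∑ i, f i ^ 2) := by
  refine Real.le_sqrt_of_sq_le ?_
  simpa using sq_sum_le_card_mul_sum_sq (s := univ) (f := fun i => |f i|)

theorem sum_sub_inv_card_sq {p : ι → ℝ} (hp : ∑ i, p i = 1) :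
    ∑ i, (p i - 1 / Fintype.card ι) ^ 2 = ∑ i, p i ^ 2 - 1 / Fintype.card ι := by
  have hK : (Fintype.card ι : ℝ) ≠ 0 := by
    rintro hK
    rw [Nat.cast_eq_zero, Fintype.card_eq_zero_iff] at hK
    simp at hp
  simp only [sub_sq, sum_add_distrib, sum_sub_distrib, ← sum_mul, ← mul_sum, hp, sum_const,
    card_univ, nsmul_eq_mul]
  field_simp
  ring

theorem sum_abs_prod_sub_prod_le {p q : ι → ℝ}
    (hp₀ : ∀ x, 0 ≤ p x) (hp₁ : ∑ x, p x = 1)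
    (hq₀ : ∀ x, 0 ≤ q x) (hq₁ : ∑ x, q x = 1) :
    ∀ n : ℕ, ∑ c : Fin n → ι, |∏ i, p (c i) - ∏ i, q (c i)| ≤ n * ∑ x, |p x - q x|
  | 0 => by simp
  | n + 1 => by
    have ih := sum_abs_prod_sub_prod_le hp₀ hp₁ hq₀ hq₁ n
    have hQ : ∑ c : Fin n → ι, ∏ i, q (c i) = 1 := by
      rw [← Fintype.sum_pow, hq₁, one_pow]
    rw [← (Fin.consEquiv fun _ => ι).sum_comp, Fintype.sum_prod_type]
    simp only [Fin.consEquiv, Equiv.coe_fn_mk, Fin.prod_univ_succ, Fin.cons_zero, Fin.cons_succ]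
    calc ∑ x, ∑ c : Fin n → ι, |p x * ∏ i, p (c i) - q x * ∏ i, q (c i)|
        ≤ ∑ x, ∑ c : Fin n → ι,
            (p x * |∏ i, p (c i) - ∏ i, q (c i)| + |p x - q x| * ∏ i, q (c i)) := by
          gcongr with x _ c _
          calc _ = |p x * (∏ i, p (c i) - ∏ i, q (c i)) + (p x - q x) * ∏ i, q (c i)| := by
                ring_nf
            _ ≤ _ := by
                grw [abs_add_le, abs_mul, abs_mul, abs_of_nonneg (hp₀ x),
                  abs_of_nonneg (prod_nonneg fun i _ => hq₀ (c i))]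
      _ = ∑ x, p x * ∑ c : Fin n → ι, |∏ i, p (c i) - ∏ i, q (c i)|
            + ∑ x, |p x - q x| := by
          simp only [sum_add_distrib, ← mul_sum, hQ, mul_one]
      _ ≤ ∑ x, p x * (n * ∑ x, |p x - q x|) + ∑ x, |p x - q x| := by
          gcongr with x; exact hp₀ x
      _ = (n + 1 : ℕ) * ∑ x, |p x - q x| := by
          rw [← sum_mul, hp₁]; push_cast; ring

end Inequalities

section UniversalHash
variable {α σ G : Type*} [Fintype α] [Fintype σ] [DecidableEq G]

def IsUniversalHashFamily [Fintype G] (h : α → σ → G) : Prop :=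
  ∀ S S', S ≠ S' → #{A | h A S = h A S'} * Fintype.card G ≤ Fintype.card α

theorem card_fiber_graph [DecidableEq α] (h : α → σ → G) {n : ℕ} (A : α)
    (c : Fin n → G) :
    #{ω : α × (Fin n → σ) | (ω.1, fun i => h ω.1 (ω.2 i)) = (A, c)}
      = ∏ i, #{S | h A S = c i} := by
  rw [← Fintype.card_piFinset, ← one_mul (Fintype.piFinset _).card, ← card_singleton A,
    ← card_product]
  congr 1
  ext ⟨A', s⟩
  simp only [mem_filter, mem_univ, true_and, mem_product, mem_singleton, Fintype.mem_piFinset,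
    Prod.mk.injEq, funext_iff]
  constructor
  · rintro ⟨rfl, hs⟩; exact ⟨rfl, hs⟩
  · rintro ⟨rfl, hs⟩; exact ⟨rfl, hs⟩

theorem statDistToUniform_graph_eq [DecidableEq α] [Fintype G] (h : α → σ → G) (n : ℕ) :
    statDistToUniform (fun ω : α × (Fin n → σ) => (ω.1, fun i => h ω.1 (ω.2 i)))
      = (∑ A, ∑ c : Fin n → G,
          |∏ i, fiberProb (h A) (c i) - ∏ _i : Fin n, 1 / (Fintype.card G : ℝ)|)
        / Fintype.card α := by
  rw [statDistToUniform, Fintype.sum_prod_type, sum_div]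
  refine sum_congr rfl fun A _ => ?_
  rw [sum_div]
  refine sum_congr rfl fun c _ => ?_
  rw [card_fiber_graph]
  simp only [fiberProb, Fintype.card_prod, Fintype.card_fun, Fintype.card_fin,
    prod_div_distrib, prod_const, card_univ, Nat.cast_mul, Nat.cast_pow, Nat.cast_prod,
    div_mul_eq_div_div_swap, one_pow, ← sub_div, abs_div, Nat.abs_cast]

variable [Fintype G]

theorem IsUniversalHashFamily.sum_sq_card_fiber_le {h : α → σ → G}
    (hh : IsUniversalHashFamily h) :
    (∑ A, ∑ x, #{S | h A S = x} ^ 2) * Fintype.card G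
      ≤ Fintype.card σ * Fintype.card α * Fintype.card G
        + Fintype.card σ ^ 2 * Fintype.card α := by
  have hcoll : ∑ A, ∑ x, #{S | h A S = x} ^ 2 = ∑ S, ∑ S', #{A | h A S = h A S'} := by
    rw [sum_congr rfl fun A _ => sum_card_fiber_sq (h A), sum_comm]
    simp only [card_filter]
    exact sum_congr rfl fun S _ => sum_comm
  have hterm : ∀ S S', #{A | h A S = h A S'} * Fintype.card G
      ≤ (if S = S' then Fintype.card α * Fintype.card G else 0) + Fintype.card α := by
    intro S S'
    split_ifs with hSS'
    · exact le_add_right (Nat.mul_le_mul_right _ (card_filter_le _ _))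
    · exact (hh S S' hSS').trans_eq (zero_add _).symm
  calc (∑ A, ∑ x, #{S | h A S = x} ^ 2) * Fintype.card G
      ≤ ∑ S : σ, ∑ S' : σ, ((if S = S' then Fintype.card α * Fintype.card G else 0)
          + Fintype.card α) := by
        rw [hcoll, sum_mul]
        exact sum_le_sum fun S _ => (sum_mul ..).trans_le (sum_le_sum fun S' _ => hterm S S')
    _ = _ := by
        simp only [sum_add_distrib, sum_ite_eq, mem_univ, ↓reduceIte, sum_const, card_univ,
          smul_eq_mul]
        ring

theorem IsUniversalHashFamily.sum_sq_fiberProb_sub_le [Nonempty σ] [Nonempty G]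
    {h : α → σ → G} (hh : IsUniversalHashFamily h) :
    ∑ A, ∑ x, (fiberProb (h A) x - 1 / Fintype.card G) ^ 2
      ≤ (Fintype.card α : ℝ) / Fintype.card σ := by
  have hsq : (∑ A, ∑ x, (#{S | h A S = x} : ℝ) ^ 2) * Fintype.card G
      ≤ Fintype.card σ * Fintype.card α * Fintype.card G
        + Fintype.card σ ^ 2 * Fintype.card α := by
    exact_mod_cast hh.sum_sq_card_fiber_le
  have hN : (Fintype.card σ : ℝ) ≠ 0 := by positivity
  have hK : (0 : ℝ) < Fintype.card G := by positivity
  set a : ℝ := (Fintype.card α : ℝ)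
  set N : ℝ := (Fintype.card σ : ℝ)
  set K : ℝ := (Fintype.card G : ℝ)
  have hcoll : (∑ A, ∑ x, (#{S | h A S = x} : ℝ) ^ 2) / N ^ 2 ≤ a / N + a / K := by
    rw [div_le_iff₀ (by positivity)]
    refine le_of_mul_le_mul_right (hsq.trans_eq ?_) hK
    field_simp
  rw [sum_congr rfl fun A _ => sum_sub_inv_card_sq (sum_fiberProb (h A))]
  simp only [fiberProb, div_pow, ← sum_div, sum_sub_distrib, sum_const, card_univ, nsmul_eq_mul,
    mul_one]
  linarith

theorem IsUniversalHashFamily.statDistToUniform_graph_le [DecidableEq α] [Nonempty α]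
    [Nonempty σ] {h : α → σ → G} (hh : IsUniversalHashFamily h) (n : ℕ) :
    statDistToUniform (fun ω : α × (Fin n → σ) => (ω.1, fun i => h ω.1 (ω.2 i)))
      ≤ n * √(Fintype.card G / Fintype.card σ) := by
  have : Nonempty G := ⟨h (Classical.arbitrary α) (Classical.arbitrary σ)⟩
  have ha : (Fintype.card α : ℝ) ≠ 0 := by positivity
  set a : ℝ := (Fintype.card α : ℝ)
  set N : ℝ := (Fintype.card σ : ℝ)
  set K : ℝ := (Fintype.card G : ℝ)
  have hunif : ∑ _x : G, 1 / K = 1 := by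
    rw [sum_const, card_univ, nsmul_eq_mul, mul_one_div, div_self (by positivity)]
  have hybrid := fun A => sum_abs_prod_sub_prod_le (fiberProb_nonneg (h A)) (sum_fiberProb (h A))
    (fun _ => by positivity) hunif n
  have hcs := sum_abs_le_sqrt_card_mul_sum_sq fun y : α × G => fiberProb (h y.1) y.2 - 1 / K
  rw [Fintype.card_prod, Fintype.sum_prod_type, Fintype.sum_prod_type] at hcs
  rw [statDistToUniform_graph_eq]
  calc _ ≤ (∑ A, n * ∑ x, |fiberProb (h A) x - 1 / K|) / a := by
        gcongr with A; exact hybrid A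
    _ = n / a * ∑ A, ∑ x, |fiberProb (h A) x - 1 / K| := by
        rw [← mul_sum]; ring
    _ ≤ n / a * √(a * K * (a / N)) := by
        gcongr
        refine hcs.trans (Real.sqrt_le_sqrt ?_)
        push_cast
        gcongr
        exact hh.sum_sq_fiberProb_sub_le
    _ = n * √(K / N) := by
        rw [show a * K * (a / N) = a ^ 2 * (K / N) by ring, Real.sqrt_mul (by positivity),
          Real.sqrt_sq (by positivity)]
        field_simp

end UniversalHash

section SubsetSums
variable {ι G : Type*} [Fintype ι] [DecidableEq ι] [AddCommGroup G] [Fintype G] [DecidableEq G]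

theorem card_filter_sum_eq_sum_mul_card {S S' : Finset ι} (hSS' : S ≠ S') :
    #{A : ι → G | ∑ j ∈ S, A j = ∑ j ∈ S', A j} * Fintype.card G
      = Fintype.card G ^ Fintype.card ι := by
  let φ : (ι → G) →+ G := AddMonoidHom.mk' (fun A => ∑ j ∈ S, A j - ∑ j ∈ S', A j)
    fun A B => by simp only [Pi.add_apply, sum_add_distrib]; abel
  have hφ : ∀ j g, φ (Pi.single j g) = (if j ∈ S then g else 0) - if j ∈ S' then g else 0 :=
    fun j g => by simp [φ, sum_pi_single']
  have hsurj : Function.Surjective φ := by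
    intro g
    by_cases hsub : S ⊆ S'
    · obtain ⟨j, hjS', hjS⟩ := not_subset.mp fun h => hSS' (subset_antisymm hsub h)
      exact ⟨Pi.single j (-g), by simp [hφ, hjS, hjS']⟩
    · obtain ⟨j, hjS, hjS'⟩ := not_subset.mp hsub
      exact ⟨Pi.single j g, by simp [hφ, hjS, hjS']⟩
  have hker : #{A : ι → G | ∑ j ∈ S, A j = ∑ j ∈ S', A j} = Nat.card φ.ker := by
    rw [← Fintype.card_subtype, Nat.card_eq_fintype_card]
    exact Fintype.card_congr (Equiv.subtypeEquivRight fun A => by simp [φ, sub_eq_zero])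
  have hrange : Nat.card φ.range = Fintype.card G := by
    rw [AddMonoidHom.range_eq_top.mpr hsurj, AddSubgroup.card_top, Nat.card_eq_fintype_card]
  calc _ = Nat.card φ.ker * φ.ker.index := by rw [hker, AddSubgroup.index_ker, hrange]
    _ = _ := by rw [AddSubgroup.card_mul_index, Nat.card_eq_fintype_card, Fintype.card_fun]

theorem isUniversalHashFamily_subsetSum (p : Finset ι → Prop) :
    IsUniversalHashFamily fun (A : ι → G) (S : {S : Finset ι // p S}) => ∑ j ∈ S.1, A j :=
  fun _ _ hSS' => (card_filter_sum_eq_sum_mul_card (Subtype.coe_ne_coe.mpr hSS')).le.trans_eq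
    Fintype.card_fun.symm

end SubsetSums

theorem Nat.pow_le_choose_mul_pow {M t : ℕ} (htM : t ≤ M) : M ^ t ≤ M.choose t * t ^ t := by
  have hfac : M ^ t * t.factorial ≤ t ^ t * M.descFactorial t := by
    have hpow : ∀ a : ℕ, a ^ t = ∏ _i ∈ range t, a := fun a => by simp
    rw [← descFactorial_self, descFactorial_eq_prod_range, descFactorial_eq_prod_range, hpow M,
      hpow t, ← prod_mul_distrib, ← prod_mul_distrib]
    refine prod_le_prod' fun i _ => ?_
    rw [Nat.mul_sub, Nat.mul_sub, mul_comm t M]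
    exact Nat.sub_le_sub_left (Nat.mul_le_mul_right i htM) _
  rw [descFactorial_eq_factorial_mul_choose] at hfac
  exact Nat.le_of_mul_le_mul_right (by linarith) t.factorial_pos

theorem div_choose_le_mul_pow_div_pow {M t : ℕ} (htM : t ≤ M) {x : ℝ} (hx : 0 ≤ x) :
    x / M.choose t ≤ x * t ^ t / M ^ t := by
  have hN : 0 < M.choose t := Nat.choose_pos htM
  have hMt : (M : ℝ) ^ t ≤ M.choose t * (t : ℝ) ^ t := by
    exact_mod_cast Nat.pow_le_choose_mul_pow htM
  rw [div_le_div_iff₀ (by positivity) (by exact_mod_cast hN.trans_le (Nat.choose_le_pow M t)),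
    mul_assoc]
  exact mul_le_mul_of_nonneg_left (hMt.trans_eq (mul_comm _ _)) hx

theorem le_add_one_mul_rpow_of_le_two {x n r : ℝ} (hn : 1 ≤ n) (hr : 0 ≤ r) (h₂ : x ≤ 2)
    (hsqrt : x ≤ n * √r) : x ≤ (n + 1) * r ^ (1 / 4 : ℝ) := by
  rcases le_total r 1 with hr₁ | hr₁
  · calc x ≤ n * r ^ (1 / 2 : ℝ) := by rwa [← Real.sqrt_eq_rpow]
      _ ≤ (n + 1) * r ^ (1 / 4 : ℝ) :=
        mul_le_mul (by linarith) (Real.rpow_le_rpow_of_exponent_ge' hr hr₁ (by norm_num)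
          (by norm_num)) (by positivity) (by linarith)
  · calc x ≤ (n + 1) * 1 := by linarith
      _ ≤ (n + 1) * r ^ (1 / 4 : ℝ) := by
        gcongr
        exact Real.one_le_rpow hr₁ (by norm_num)

theorem stmt_3_general (Q M M' t : ℕ) [NeZero Q] (hM' : 1 ≤ M') (htM : t ≤ M) :
    (∑ z : (Fin M → ZMod Q) × (Fin M' → ZMod Q),
        |((Finset.univ.filter
            (fun ω : (Fin M → ZMod Q) × (Fin M' → {S : Finset (Fin M) // S.card = t}) =>
              ω.1 = z.1 ∧ (fun i => ∑ j ∈ (ω.2 i).1, ω.1 j) = z.2)).card : ℝ)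
            / Fintype.card
                ((Fin M → ZMod Q) × (Fin M' → {S : Finset (Fin M) // S.card = t}))
          - 1 / (Q : ℝ) ^ (M + M')|)
      ≤ ((M' : ℝ) + 1) * (Q : ℝ) ^ ((1 : ℝ) / 4) * (M.choose t : ℝ) ^ (-(1 : ℝ) / 4)
    ∧ ((M' : ℝ) + 1) * (Q : ℝ) ^ ((1 : ℝ) / 4) * (M.choose t : ℝ) ^ (-(1 : ℝ) / 4)
      ≤ ((M' : ℝ) + 1) * ((Q : ℝ) * (t : ℝ) ^ t / (M : ℝ) ^ t) ^ ((1 : ℝ) / 4) := by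
  have hcard : Fintype.card {S : Finset (Fin M) // S.card = t} = M.choose t := by
    rw [Fintype.card_finset_len, Fintype.card_fin]
  have : Nonempty {S : Finset (Fin M) // S.card = t} :=
    Fintype.card_pos_iff.mp (hcard ▸ Nat.choose_pos htM)
  have hhash := (isUniversalHashFamily_subsetSum (G := ZMod Q)
    fun S : Finset (Fin M) => S.card = t).statDistToUniform_graph_le M'
  rw [ZMod.card, hcard] at hhash
  have hδ : (Q : ℝ) ^ ((1 : ℝ) / 4) * (M.choose t : ℝ) ^ (-(1 : ℝ) / 4)
      = ((Q : ℝ) / M.choose t) ^ ((1 : ℝ) / 4) := by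
    rw [Real.div_rpow (by positivity) (by positivity), neg_div, Real.rpow_neg (by positivity),
      ← div_eq_mul_inv]
  rw [mul_assoc, hδ]
  refine ⟨Eq.trans_le ?_ (le_add_one_mul_rpow_of_le_two (by exact_mod_cast hM') (by positivity)
      (statDistToUniform_le_two _) hhash),
    mul_le_mul_of_nonneg_left (Real.rpow_le_rpow (by positivity)
      (div_choose_le_mul_pow_div_pow htM (Nat.cast_nonneg Q)) (by norm_num)) (by positivity)⟩
  simp only [statDistToUniform, Prod.ext_iff, Fintype.card_prod, Fintype.card_fun, ZMod.card,
    Fintype.card_fin, pow_add, Nat.cast_mul, Nat.cast_pow]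

/-- Sample `a ∈ (ℤ/Qℤ)^M` uniformly and `S_1, …, S_{M'} ⊆ [M]` independent
uniform subsets of size `t`, and set `c_i := ∑_{j ∈ S_i} a_j mod Q`. Then the joint
distribution of `(a, c)` is within statistical distance
`δ := (M'+1) · Q^{1/4} · C(M,t)^{-1/4}` of uniform on `(ℤ/Qℤ)^{M+M'}`, and moreover
`δ ≤ (M'+1) · (Q t^t / M^t)^{1/4}`. -/
theorem stmt_3 (Q M M' t : ℕ) [NeZero Q] (hQ : 2 ≤ Q) (hM : 1 ≤ M) (hM' : 1 ≤ M')
    (ht : 1 ≤ t) (htM : t ≤ M) :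
    (∑ z : (Fin M → ZMod Q) × (Fin M' → ZMod Q),
        |((Finset.univ.filter
            (fun ω : (Fin M → ZMod Q) × (Fin M' → {S : Finset (Fin M) // S.card = t}) =>
              ω.1 = z.1 ∧ (fun i => ∑ j ∈ (ω.2 i).1, ω.1 j) = z.2)).card : ℝ)
            / Fintype.card
                ((Fin M → ZMod Q) × (Fin M' → {S : Finset (Fin M) // S.card = t}))
          - 1 / (Q : ℝ) ^ (M + M')|)
      ≤ ((M' : ℝ) + 1) * (Q : ℝ) ^ ((1 : ℝ) / 4) * (M.choose t : ℝ) ^ (-(1 : ℝ) / 4)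
    ∧ ((M' : ℝ) + 1) * (Q : ℝ) ^ ((1 : ℝ) / 4) * (M.choose t : ℝ) ^ (-(1 : ℝ) / 4)
      ≤ ((M' : ℝ) + 1) * ((Q : ℝ) * (t : ℝ) ^ t / (M : ℝ) ^ t) ^ ((1 : ℝ) / 4) :=
  stmt_3_general Q M M' t hM' htM
end

section
/- Let Q ≥ 2, M, t be positive integers with t ≤ M, and let 0 < ε < 1. For a ∈ (ℤ/Qℤ)^M and c ∈ ℤ/Qℤ, define the hitting probability p_{a,c,t} := Pr_{x ~ U(X_t)}[x_1 = 1 | ⟨a, x⟩ = c mod Q], where X_t := {x ∈ {0,1}^M : Σ_i x_i = t} and x is uniform on X_t; if no x ∈ X_t satisfies ⟨a, x⟩ = c mod Q, define p_{a,c,t} := 1. Then, with a chosen uniformly from (ℤ/Qℤ)^M and c chosen uniformly from ℤ/Qℤ (independently), the probability that p_{a,c,t} ≥ ((1+ε)/(1−ε)) · (t/M) is at most 4 Q^{1/4} / (ε · C(M−1, t−1)^{1/4}). -/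
/-!
For a family `F` of subsets of `Fin M`, let `N_F(a, c)` count the `S ∈ F` with
`∑ i ∈ S, a i = c`. For uniform `(a, c)` each such event has probability `1/Q`, and the events
for distinct `S ≠ S'` are independent because the pair of affine forms is onto `(ℤ/Qℤ)²`.
Hence `N_F` has mean `|F|/Q` and variance at most `|F|/Q`, and Chebyshev bounds the probability
of a relative deviation `ε` by `Q/(ε²|F|)`. Applied to the `t`-subsets and to the `t`-subsets
containing `0` (sizes in ratio `M : t`), it shows that `p_{a,c,t} = N₁/N₀` stays below
`(1+ε)/(1-ε) · t/M` except with probability `2Q/(ε² C(M-1,t-1))`; together with the trivial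
bound `1` this gives the fourth-root estimate.
-/

open scoped Classical

/-- The hitting probability `p_{a,c,t}`: the probability that a uniformly random subset
`S ⊆ [M]` of size `t` with `∑_{i ∈ S} a_i = c (mod Q)` contains the first index
(equivalently, for `x` uniform on `X_t := {x ∈ {0,1}^M : ‖x‖₁ = t}`, the conditional
probability that `x_1 = 1` given `⟨a, x⟩ = c mod Q`). If no such subset exists, it is
defined to be `1`. -/
noncomputable def hitProb (Q M t : ℕ) [NeZero Q] [NeZero M]
    (a : Fin M → ZMod Q) (c : ZMod Q) : ℝ :=
  let A := Finset.univ.filter (fun S : Finset (Fin M) => S.card = t ∧ ∑ i ∈ S, a i = c)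
  if A.Nonempty then ((A.filter (fun S => (0 : Fin M) ∈ S)).card : ℝ) / A.card else 1

open Finset

theorem AddMonoidHom.card_filter_eq_zero_mul_card {A B : Type*} [AddGroup A] [Fintype A]
    [AddGroup B] [Fintype B] [DecidableEq B] (φ : A →+ B) (hφ : Function.Surjective φ) :
    #{x | φ x = 0} * Fintype.card B = Fintype.card A := by
  calc #{x | φ x = 0} * Fintype.card B = ∑ b : B, #{x | φ x = b} := by
        rw [sum_congr rfl fun b _ ↦ AddMonoidHom.card_fiber_eq_of_mem_range φ (hφ b) (hφ 0)]
        simp [mul_comm]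
    _ = Fintype.card A := (card_eq_sum_card_fiberwise fun x _ ↦ mem_univ (φ x)).symm

theorem card_filter_le_abs_sub_div_card_le {α : Type*} [Fintype α] [Nonempty α] (f : α → ℝ)
    {μ δ : ℝ} (hδ : 0 < δ) (h₁ : ∑ x, f x = μ * Fintype.card α)
    (h₂ : ∑ x, f x ^ 2 ≤ (μ + μ ^ 2) * Fintype.card α) :
    (#{x | δ ≤ |f x - μ|} : ℝ) / Fintype.card α ≤ μ / δ ^ 2 := by
  have hvar : ∑ x, (f x - μ) ^ 2 = ∑ x, f x ^ 2 - μ ^ 2 * Fintype.card α := by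
    simp only [sub_sq, sum_add_distrib, sum_sub_distrib, ← sum_mul, ← mul_sum, h₁, sum_const,
      card_univ, nsmul_eq_mul]
    ring
  rw [div_le_div_iff₀ (by exact_mod_cast Fintype.card_pos) (by positivity)]
  calc #{x | δ ≤ |f x - μ|} * δ ^ 2 = ∑ x with δ ≤ |f x - μ|, δ ^ 2 := by
        rw [sum_const, nsmul_eq_mul]
    _ ≤ ∑ x with δ ≤ |f x - μ|, (f x - μ) ^ 2 :=
        sum_le_sum fun x hx ↦ by simpa using pow_le_pow_left₀ hδ.le (mem_filter.mp hx).2 2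
    _ ≤ ∑ x, (f x - μ) ^ 2 :=
        sum_le_sum_of_subset_of_nonneg (subset_univ _) fun _ _ _ ↦ sq_nonneg _
    _ ≤ μ * Fintype.card α := by rw [hvar]; linarith

section SubsetSum

variable {ι G : Type*} [AddCommGroup G]

def subsetSumDefect (S : Finset ι) : (ι → G) × G →+ G :=
  AddMonoidHom.mk' (fun ω ↦ ∑ i ∈ S, ω.1 i - ω.2) fun ω ω' ↦ by
    simp only [Prod.fst_add, Prod.snd_add, Pi.add_apply, sum_add_distrib]
    abel

theorem subsetSumDefect_eq_zero_iff {S : Finset ι} {ω : (ι → G) × G} :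
    subsetSumDefect S ω = 0 ↔ ∑ i ∈ S, ω.1 i = ω.2 :=
  sub_eq_zero

theorem subsetSumDefect_surjective (S : Finset ι) :
    Function.Surjective (subsetSumDefect (G := G) S) :=
  fun g ↦ ⟨(0, -g), by simp [subsetSumDefect]⟩

theorem subsetSumDefect_prod_surjective [DecidableEq ι] {S S' : Finset ι} (h : S ≠ S') :
    Function.Surjective ((subsetSumDefect (G := G) S).prod (subsetSumDefect S')) := by
  rintro ⟨u, v⟩
  by_cases hSS' : S ⊆ S'
  · obtain ⟨i, hiS', hiS⟩ := not_subset.mp fun hS'S ↦ h (subset_antisymm hSS' hS'S)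
    refine ⟨(Pi.single i (v - u), -u), ?_⟩
    simp [subsetSumDefect, hiS, hiS']
  · obtain ⟨i, hiS, hiS'⟩ := not_subset.mp hSS'
    refine ⟨(Pi.single i (u - v), -v), ?_⟩
    simp [subsetSumDefect, hiS, hiS']

variable [Fintype ι] [DecidableEq ι] [Fintype G] [DecidableEq G]

theorem card_filter_subsetSum_eq (S : Finset ι) :
    #{ω : (ι → G) × G | ∑ i ∈ S, ω.1 i = ω.2} = Fintype.card G ^ Fintype.card ι := by
  have := (subsetSumDefect (G := G) S).card_filter_eq_zero_mul_card
    (subsetSumDefect_surjective S)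
  simp only [subsetSumDefect_eq_zero_iff, Fintype.card_prod, Fintype.card_pi, prod_const,
    card_univ] at this
  exact Nat.eq_of_mul_eq_mul_right Fintype.card_pos this

theorem card_filter_subsetSum_and_subsetSum_mul_card {S S' : Finset ι} (h : S ≠ S') :
    #{ω : (ι → G) × G | ∑ i ∈ S, ω.1 i = ω.2 ∧ ∑ i ∈ S', ω.1 i = ω.2} *
      Fintype.card G = Fintype.card G ^ Fintype.card ι := by
  have := ((subsetSumDefect (G := G) S).prod (subsetSumDefect S')).card_filter_eq_zero_mul_card
    (subsetSumDefect_prod_surjective h)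
  simp only [Prod.ext_iff, AddMonoidHom.prod_apply, Prod.fst_zero, Prod.snd_zero,
    subsetSumDefect_eq_zero_iff, Fintype.card_prod, Fintype.card_pi, prod_const,
    card_univ, ← mul_assoc] at this
  exact Nat.eq_of_mul_eq_mul_right Fintype.card_pos this

def subsetSumCount (F : Finset (Finset ι)) (ω : (ι → G) × G) : ℕ :=
  #{S ∈ F | ∑ i ∈ S, ω.1 i = ω.2}

theorem sum_subsetSumCount (F : Finset (Finset ι)) :
    ∑ ω : (ι → G) × G, subsetSumCount F ω = #F * Fintype.card G ^ Fintype.card ι := by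
  simp only [subsetSumCount, card_filter]
  rw [sum_comm]
  simp [card_filter_subsetSum_eq]

theorem sum_subsetSumCount_sq (F : Finset (Finset ι)) :
    ∑ ω : (ι → G) × G, subsetSumCount F ω ^ 2 =
      ∑ S ∈ F, ∑ S' ∈ F,
        #{ω : (ι → G) × G | ∑ i ∈ S, ω.1 i = ω.2 ∧ ∑ i ∈ S', ω.1 i = ω.2} := by
  simp only [subsetSumCount, card_filter, sq, sum_mul_sum, ite_zero_mul_ite_zero, mul_one]
  rw [sum_comm]
  refine sum_congr rfl fun S _ ↦ ?_
  rw [sum_comm]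

theorem card_mul_sum_subsetSumCount_sq_le (F : Finset (Finset ι)) :
    Fintype.card G * ∑ ω : (ι → G) × G, subsetSumCount F ω ^ 2 ≤
      Fintype.card G * (#F * Fintype.card G ^ Fintype.card ι) +
        #F ^ 2 * Fintype.card G ^ Fintype.card ι := by
  have hrow (S) (hS : S ∈ F) : Fintype.card G * ∑ S' ∈ F,
      #{ω : (ι → G) × G | ∑ i ∈ S, ω.1 i = ω.2 ∧ ∑ i ∈ S', ω.1 i = ω.2} ≤
        Fintype.card G * Fintype.card G ^ Fintype.card ι +
          #F * Fintype.card G ^ Fintype.card ι := by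
    rw [← add_sum_erase _ _ hS, mul_add, mul_sum]
    gcongr
    · simp [card_filter_subsetSum_eq]
    · calc ∑ S' ∈ F.erase S, Fintype.card G *
            #{ω : (ι → G) × G | ∑ i ∈ S, ω.1 i = ω.2 ∧ ∑ i ∈ S', ω.1 i = ω.2}
          = ∑ S' ∈ F.erase S, Fintype.card G ^ Fintype.card ι :=
            sum_congr rfl fun S' hS' ↦ by
              rw [mul_comm,
                card_filter_subsetSum_and_subsetSum_mul_card (ne_of_mem_erase hS').symm]
        _ ≤ #F * Fintype.card G ^ Fintype.card ι := by
            rw [sum_const, smul_eq_mul]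
            exact Nat.mul_le_mul_right _ card_erase_le
  rw [sum_subsetSumCount_sq, mul_sum]
  refine (sum_le_sum hrow).trans_eq ?_
  rw [sum_const, smul_eq_mul]
  ring

noncomputable def subsetSumCountDeviation (F : Finset (Finset ι)) (ε : ℝ) :
    Finset ((ι → G) × G) :=
  {ω | ε * (#F / Fintype.card G) ≤ |(subsetSumCount F ω : ℝ) - #F / Fintype.card G|}

theorem card_subsetSumCountDeviation_div_card_le (F : Finset (Finset ι)) (hF : F.Nonempty)
    {ε : ℝ} (hε : 0 < ε) :
    (#(subsetSumCountDeviation (G := G) F ε) : ℝ) / Fintype.card ((ι → G) × G) ≤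
      Fintype.card G / (ε ^ 2 * #F) := by
  have hq : (0 : ℝ) < Fintype.card G := by exact_mod_cast Fintype.card_pos
  have hF' : (0 : ℝ) < #F := by exact_mod_cast hF.card_pos
  have hΩ : (Fintype.card ((ι → G) × G) : ℝ) =
      Fintype.card G ^ Fintype.card ι * Fintype.card G := by
    simp
  have h₁ : ∑ ω : (ι → G) × G, (subsetSumCount F ω : ℝ) =
      #F * Fintype.card G ^ Fintype.card ι := by
    exact_mod_cast sum_subsetSumCount F
  have h₂ : Fintype.card G * ∑ ω : (ι → G) × G, (subsetSumCount F ω : ℝ) ^ 2 ≤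
      Fintype.card G * (#F * Fintype.card G ^ Fintype.card ι) +
        #F ^ 2 * Fintype.card G ^ Fintype.card ι := by
    exact_mod_cast card_mul_sum_subsetSumCount_sq_le F
  refine (card_filter_le_abs_sub_div_card_le
    (fun ω : (ι → G) × G ↦ (subsetSumCount F ω : ℝ)) (μ := #F / Fintype.card G)
    (δ := ε * (#F / Fintype.card G)) (by positivity)
    (by rw [hΩ, h₁]; field_simp)
    (le_of_mul_le_mul_left (h₂.trans_eq (by rw [hΩ]; field_simp)) hq)).trans_eq ?_
  field_simp

end SubsetSum

theorem card_filter_mem_powersetCard_univ {α : Type*} [Fintype α] [DecidableEq α] (a : α)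
    {k : ℕ} (hk : 1 ≤ k) : #{S ∈ powersetCard k (univ : Finset α) | a ∈ S} =
      (Fintype.card α - 1).choose (k - 1) := by
  simpa using card_filter_powersetCard_subset {a} univ k (subset_univ _) (by simpa using hk)

theorem card_filter_mem_div_card_powersetCard_univ {α : Type*} [Fintype α] [DecidableEq α]
    (a : α) {k : ℕ} (hk : 1 ≤ k) (hkα : k ≤ Fintype.card α) :
    (#{S ∈ powersetCard k (univ : Finset α) | a ∈ S} : ℝ) /
        #(powersetCard k (univ : Finset α)) =
      k / Fintype.card α := by
  have hα : 1 ≤ Fintype.card α := Fintype.card_pos_iff.mpr ⟨a⟩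
  have hchoose := Nat.add_one_mul_choose_eq (Fintype.card α - 1) (k - 1)
  rw [Nat.sub_add_cancel hk, Nat.sub_add_cancel hα] at hchoose
  rw [card_filter_mem_powersetCard_univ a hk, card_powersetCard, card_univ,
    div_eq_div_iff (by exact_mod_cast (Nat.choose_pos hkα).ne') (by positivity)]
  exact_mod_cast (by linarith : (Fintype.card α - 1).choose (k - 1) * Fintype.card α =
    k * (Fintype.card α).choose k)

theorem hitProb_eq_div {Q M t : ℕ} [NeZero Q] [NeZero M] {ω : (Fin M → ZMod Q) × ZMod Q}
    (h : 0 < subsetSumCount (powersetCard t (univ : Finset (Fin M))) ω) :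
    hitProb Q M t ω.1 ω.2 =
      (subsetSumCount {S ∈ powersetCard t (univ : Finset (Fin M)) | 0 ∈ S} ω : ℝ) /
        subsetSumCount (powersetCard t (univ : Finset (Fin M))) ω := by
  obtain ⟨a, c⟩ := ω
  have hA : ({S : Finset (Fin M) | #S = t ∧ ∑ i ∈ S, a i = c} : Finset _) =
      {S ∈ powersetCard t (univ : Finset (Fin M)) | ∑ i ∈ S, a i = c} := by
    ext S
    simp [mem_powersetCard]
  have hA₁ :
      ({S ∈ {S : Finset (Fin M) | #S = t ∧ ∑ i ∈ S, a i = c} | 0 ∈ S} : Finset _) =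
      {S ∈ {S ∈ powersetCard t (univ : Finset (Fin M)) | 0 ∈ S} | ∑ i ∈ S, a i = c} := by
    ext S
    simp only [mem_filter, mem_univ, mem_powersetCard, subset_univ, true_and]
    tauto
  simp only [hitProb, subsetSumCount] at h ⊢
  rw [hA₁, hA, if_pos (card_pos.mp h)]

theorem div_lt_of_abs_sub_lt {x y μ ν ε : ℝ} (hε0 : 0 < ε) (hε1 : ε < 1) (hν : 0 < ν)
    (hx : |x - μ| < ε * μ) (hy : |y - ν| < ε * ν) :
    x / y < (1 + ε) / (1 - ε) * (μ / ν) := by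
  have hμ : 0 < μ := pos_of_mul_pos_right ((abs_nonneg _).trans_lt hx) hε0.le
  have hν' : 0 < (1 - ε) * ν := mul_pos (by linarith) hν
  have hy' : (1 - ε) * ν < y := by linarith [(abs_lt.mp hy).1]
  rw [div_mul_div_comm, div_lt_div_iff₀ (hν'.trans hy') hν']
  nlinarith [mul_lt_mul_of_pos_right (by linarith [(abs_lt.mp hx).2] : x < (1 + ε) * μ) hν',
    mul_lt_mul_of_pos_left hy' (by positivity : 0 < (1 + ε) * μ)]

theorem filter_le_hitProb_subset {Q M t : ℕ} [NeZero Q] [NeZero M] (ht : 1 ≤ t) (htM : t ≤ M)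
    {ε : ℝ} (hε0 : 0 < ε) (hε1 : ε < 1) :
    ({ω : (Fin M → ZMod Q) × ZMod Q |
        ((1 + ε) / (1 - ε)) * ((t : ℝ) / M) ≤ hitProb Q M t ω.1 ω.2} : Finset _) ⊆
      subsetSumCountDeviation {S ∈ powersetCard t (univ : Finset (Fin M)) | 0 ∈ S} ε ∪
        subsetSumCountDeviation (powersetCard t (univ : Finset (Fin M))) ε := by
  intro ω hω
  by_contra! h
  simp only [mem_union, subsetSumCountDeviation, mem_filter, mem_univ, true_and, not_or,
    not_le] at h hω
  have hν : (0 : ℝ) < #(powersetCard t (univ : Finset (Fin M))) / Fintype.card (ZMod Q) := by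
    have : 0 < #(powersetCard t (univ : Finset (Fin M))) := by simpa using Nat.choose_pos htM
    positivity
  have hN₀ : 0 < subsetSumCount (powersetCard t (univ : Finset (Fin M))) ω := by
    have : (0 : ℝ) < subsetSumCount (powersetCard t (univ : Finset (Fin M))) ω := by
      nlinarith [(abs_lt.mp h.2).1]
    exact_mod_cast this
  have hlt := div_lt_of_abs_sub_lt hε0 hε1 hν h.1 h.2
  rw [div_div_div_cancel_right₀ (by positivity), ← hitProb_eq_div hN₀,
    card_filter_mem_div_card_powersetCard_univ 0 ht (by simpa using htM), Fintype.card_fin] at hlt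
  linarith

theorem card_filter_le_hitProb_div_card_le {Q M t : ℕ} [NeZero Q] [NeZero M] (ht : 1 ≤ t)
    (htM : t ≤ M) {ε : ℝ} (hε0 : 0 < ε) (hε1 : ε < 1) :
    (#{ω : (Fin M → ZMod Q) × ZMod Q |
        ((1 + ε) / (1 - ε)) * ((t : ℝ) / M) ≤ hitProb Q M t ω.1 ω.2} : ℝ) /
      Fintype.card ((Fin M → ZMod Q) × ZMod Q) ≤
        2 * (Q / (M - 1).choose (t - 1)) / ε ^ 2 := by
  set F₀ := powersetCard t (univ : Finset (Fin M))
  set F₁ := {S ∈ F₀ | 0 ∈ S}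
  have hF₁ : #F₁ = (M - 1).choose (t - 1) := by
    simpa using card_filter_mem_powersetCard_univ (0 : Fin M) ht
  have hF₁ne : F₁.Nonempty := card_pos.mp (hF₁ ▸ Nat.choose_pos (by omega))
  have hF₁F₀ : (#F₁ : ℝ) ≤ #F₀ := by exact_mod_cast card_filter_le _ _
  calc _ ≤ (#(subsetSumCountDeviation F₁ ε) + #(subsetSumCountDeviation F₀ ε) : ℕ) /
        (Fintype.card ((Fin M → ZMod Q) × ZMod Q) : ℝ) := by
        gcongr
        exact (card_le_card (filter_le_hitProb_subset ht htM hε0 hε1)).trans (card_union_le _ _)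
    _ ≤ Q / (ε ^ 2 * #F₁) + Q / (ε ^ 2 * #F₀) := by
        rw [Nat.cast_add, add_div]
        simpa only [ZMod.card] using add_le_add
          (card_subsetSumCountDeviation_div_card_le (G := ZMod Q) F₁ hF₁ne hε0)
          (card_subsetSumCountDeviation_div_card_le (G := ZMod Q) F₀
            (hF₁ne.mono (filter_subset _ _)) hε0)
    _ ≤ Q / (ε ^ 2 * #F₁) + Q / (ε ^ 2 * #F₁) := by gcongr
    _ = 2 * (Q / (M - 1).choose (t - 1)) / ε ^ 2 := by rw [hF₁]; ring

theorem le_four_mul_rpow_div_of_le_one_of_le {P r ε : ℝ} (hr : 0 ≤ r) (hε0 : 0 < ε)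
    (hε1 : ε < 1) (hP1 : P ≤ 1) (hP2 : P ≤ 2 * r / ε ^ 2) :
    P ≤ 4 * r ^ ((1 : ℝ) / 4) / ε := by
  set s := r ^ ((1 : ℝ) / 4)
  have hs : 0 ≤ s := Real.rpow_nonneg hr _
  have hs4 : s ^ 4 = r := by
    rw [← Real.rpow_natCast, ← Real.rpow_mul hr]
    norm_num
  rcases le_or_gt 1 (4 * s / ε) with h | h
  · exact hP1.trans h
  · have hsε : s ≤ ε / 4 := by rw [div_lt_one hε0] at h; linarith
    refine hP2.trans ?_
    rw [div_le_div_iff₀ (by positivity) hε0, ← hs4]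
    have : s ^ 3 ≤ (ε / 4) ^ 3 := pow_le_pow_left₀ hs hsε 3
    nlinarith [mul_le_mul_of_nonneg_left this (by positivity : 0 ≤ s * ε),
      mul_nonneg (by positivity : 0 ≤ s * ε ^ 2) (by nlinarith : 0 ≤ 1 - ε ^ 2)]

theorem stmt_4_general (Q M t : ℕ) [NeZero Q] [NeZero M] (ht : 1 ≤ t) (htM : t ≤ M)
    (ε : ℝ) (hε0 : 0 < ε) (hε1 : ε < 1) :
    ((Finset.univ.filter (fun ac : (Fin M → ZMod Q) × ZMod Q =>
        ((1 + ε) / (1 - ε)) * ((t : ℝ) / M) ≤ hitProb Q M t ac.1 ac.2)).card : ℝ)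
      / Fintype.card ((Fin M → ZMod Q) × ZMod Q)
      ≤ 4 * (Q : ℝ) ^ ((1 : ℝ) / 4) / (ε * ((M - 1).choose (t - 1) : ℝ) ^ ((1 : ℝ) / 4)) := by
  calc _ ≤ 4 * ((Q : ℝ) / (M - 1).choose (t - 1)) ^ ((1 : ℝ) / 4) / ε :=
        le_four_mul_rpow_div_of_le_one_of_le (by positivity) hε0 hε1
          (div_le_one_of_le₀ (by exact_mod_cast card_le_univ _) (by positivity))
          (card_filter_le_hitProb_div_card_le ht htM hε0 hε1)
    _ = _ := by rw [Real.div_rpow (by positivity) (by positivity)]; field_simp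

/-- For `Q ≥ 2`, `1 ≤ t ≤ M`, and `0 < ε < 1`, the probability over uniformly
random `a ∈ (ℤ/Qℤ)^M` and `c ∈ ℤ/Qℤ` that
`p_{a,c,t} ≥ ((1+ε)/(1-ε)) · (t/M)` is at most `4 Q^{1/4} / (ε · C(M-1,t-1)^{1/4})`. -/
theorem stmt_4 (Q M t : ℕ) [NeZero Q] [NeZero M] (hQ : 2 ≤ Q) (ht : 1 ≤ t) (htM : t ≤ M)
    (ε : ℝ) (hε0 : 0 < ε) (hε1 : ε < 1) :
    ((Finset.univ.filter (fun ac : (Fin M → ZMod Q) × ZMod Q =>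
        ((1 + ε) / (1 - ε)) * ((t : ℝ) / M) ≤ hitProb Q M t ac.1 ac.2)).card : ℝ)
      / Fintype.card ((Fin M → ZMod Q) × ZMod Q)
      ≤ 4 * (Q : ℝ) ^ ((1 : ℝ) / 4) / (ε * ((M - 1).choose (t - 1) : ℝ) ^ ((1 : ℝ) / 4)) :=
  stmt_4_general Q M t ht htM ε hε0 hε1
end

section
/- Let Q ≥ 2, m, k be positive integers with k ≤ m. If a_1, …, a_m are sampled independently and uniformly at random from ℤ/Qℤ, and E_k is the event that there exist k distinct indices i_1, …, i_k ∈ {1,…,m} with a_{i_1} + ⋯ + a_{i_k} = 0 in ℤ/Qℤ, then 1 − Q/C(m,k) ≤ Pr[E_k] ≤ C(m,k)/Q. -/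
open scoped Classical

open Finset in
/-- Fibers of a surjective (via section `e`) additive hom all have size card G / card H. -/
lemma fiber_card_s6 {G H : Type*} [Fintype G] [Fintype H] [AddCommGroup G] [AddCommGroup H]
    [DecidableEq H] (F : G →+ H) (e : H → G) (he : ∀ h, F (e h) = h) (c : H) :
    (Finset.univ.filter fun a => F a = c).card * Fintype.card H = Fintype.card G := by
  have key : ∀ d : H, (Finset.univ.filter fun a => F a = d).card
      = (Finset.univ.filter fun a => F a = c).card := by
    intro d
    apply Finset.card_bij' (fun a _ => a + e c - e d) (fun a _ => a + e d - e c)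
    · intro a ha; simp only [mem_filter, mem_univ, true_and] at ha ⊢
      simp [ha, he]
    · intro a ha; simp only [mem_filter, mem_univ, true_and] at ha ⊢
      simp [ha, he]
    · intro a _; abel
    · intro a _; abel
  have := Finset.card_eq_sum_card_fiberwise
    (f := fun a : G => F a) (s := Finset.univ) (t := Finset.univ) (fun _ _ => mem_univ _)
  rw [Finset.card_univ] at this
  rw [this, Finset.sum_congr rfl fun d _ => key d, Finset.sum_const, Finset.card_univ,
    smul_eq_mul, mul_comm]
open Finset
section helpers
set_option linter.unusedSectionVars false
variable (Q m : ℕ) [NeZero Q]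
noncomputable def FS (S : Finset (Fin m)) : (Fin m → ZMod Q) →+ ZMod Q :=
  ∑ i ∈ S, Pi.evalAddMonoidHom (fun _ => ZMod Q) i

lemma FS_apply (S : Finset (Fin m)) (a : Fin m → ZMod Q) : FS Q m S a = ∑ i ∈ S, a i := by
  simp [FS, AddMonoidHom.finset_sum_apply, Pi.evalAddMonoidHom]

lemma fiber1 (S : Finset (Fin m)) (i0 : Fin m) (hi0 : i0 ∈ S) (c : ZMod Q) :
    (Finset.univ.filter fun a : Fin m → ZMod Q => ∑ i ∈ S, a i = c).card * Q = Q ^ m := by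
  have := fiber_card_s6 (FS Q m S) (fun c => fun j => if j = i0 then c else 0) ?_ c
  · simpa [FS_apply, ZMod.card, Fintype.card_fun] using this
  · intro h; rw [FS_apply, Finset.sum_ite_eq' S i0 (fun _ => h)]; simp [hi0]
lemma fiber2 (S T : Finset (Fin m)) (iS jT : Fin m) (hiS : iS ∈ S) (hiT : iS ∉ T)
    (hjT : jT ∈ T) (c d : ZMod Q) :
    (Finset.univ.filter fun a : Fin m → ZMod Q =>
        ∑ i ∈ S, a i = c ∧ ∑ i ∈ T, a i = d).card * Q ^ 2 = Q ^ m := by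
  have hne : iS ≠ jT := fun h => hiT (h ▸ hjT)
  have := fiber_card_s6 ((FS Q m S).prod (FS Q m T))
    (fun p => (fun j => if j = jT then p.2 else 0) +
              (fun j => if j = iS then (p.1 - if jT ∈ S then p.2 else 0) else 0)) ?_ (c, d)
  · have h2 : Fintype.card (ZMod Q × ZMod Q) = Q ^ 2 := by
      simp [ZMod.card]; ring
    rw [h2] at this
    simpa [AddMonoidHom.prod_apply, FS_apply, Fintype.card_fun, ZMod.card, Prod.ext_iff]
      using this
  · rintro ⟨x, y⟩
    simp only [AddMonoidHom.prod_apply, FS_apply, Prod.mk.injEq, Pi.add_apply]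
    constructor
    · rw [Finset.sum_add_distrib, Finset.sum_ite_eq' S jT (fun _ => y),
        Finset.sum_ite_eq' S iS (fun _ => x - if jT ∈ S then y else 0)]
      simp [hiS]
    · rw [Finset.sum_add_distrib, Finset.sum_ite_eq' T jT (fun _ => y),
        Finset.sum_ite_eq' T iS (fun _ => x - if jT ∈ S then y else 0)]
      simp [hjT, hiT]
lemma sumN (k : ℕ) (hk : 1 ≤ k) :
    (∑ a : Fin m → ZMod Q,
      ((Finset.powersetCard k Finset.univ).filter fun S : Finset (Fin m) =>
        ∑ i ∈ S, a i = 0).card) * Q = m.choose k * Q ^ m := by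
  have hswap : (∑ a : Fin m → ZMod Q,
      ((Finset.powersetCard k Finset.univ).filter fun S : Finset (Fin m) =>
        ∑ i ∈ S, a i = 0).card)
      = ∑ S ∈ Finset.powersetCard k (Finset.univ : Finset (Fin m)),
          (Finset.univ.filter fun a : Fin m → ZMod Q => ∑ i ∈ S, a i = 0).card := by
    simp_rw [Finset.card_filter]
    exact Finset.sum_comm
  have heach : ∀ S ∈ Finset.powersetCard k (Finset.univ : Finset (Fin m)),
      (Finset.univ.filter fun a : Fin m → ZMod Q => ∑ i ∈ S, a i = 0).card * Q = Q ^ m := by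
    intro S hS
    obtain ⟨i0, hi0⟩ : S.Nonempty := by
      have := (Finset.mem_powersetCard.1 hS).2
      exact Finset.card_pos.1 (this ▸ hk)
    exact fiber1 Q m S i0 hi0 0
  rw [hswap, Finset.sum_mul, Finset.sum_congr rfl heach, Finset.sum_const, smul_eq_mul,
    Finset.card_powersetCard, Finset.card_univ, Fintype.card_fin]
lemma sumN2 (k : ℕ) (hk : 1 ≤ k) :
    (∑ a : Fin m → ZMod Q,
      ((Finset.powersetCard k Finset.univ).filter fun S : Finset (Fin m) =>
        ∑ i ∈ S, a i = 0).card ^ 2) * Q ^ 2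
      ≤ m.choose k * Q ^ (m + 1) + m.choose k ^ 2 * Q ^ m := by
  classical
  set 𝒮 := Finset.powersetCard k (Finset.univ : Finset (Fin m)) with h𝒮
  have hr : 𝒮.card = m.choose k := by
    rw [h𝒮, Finset.card_powersetCard, Finset.card_univ, Fintype.card_fin]
  have hite : ∀ (p q : Prop) [Decidable p] [Decidable q],
      (if p then (1:ℕ) else 0) * (if q then 1 else 0) = if p ∧ q then 1 else 0 := by
    intro p q _ _; by_cases hp : p <;> by_cases hq : q <;> simp [hp, hq]
  have hswap : (∑ a : Fin m → ZMod Q,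
      (𝒮.filter fun S : Finset (Fin m) => ∑ i ∈ S, a i = 0).card ^ 2)
      = ∑ S ∈ 𝒮, ∑ T ∈ 𝒮, (Finset.univ.filter fun a : Fin m → ZMod Q =>
          ∑ i ∈ S, a i = 0 ∧ ∑ i ∈ T, a i = 0).card := by
    simp_rw [sq, Finset.card_filter, Finset.sum_mul_sum, hite]
    rw [Finset.sum_comm]
    refine Finset.sum_congr rfl fun S _ => Finset.sum_comm
  rw [hswap, Finset.sum_mul]
  have hbound : ∀ S ∈ 𝒮,
      (∑ T ∈ 𝒮, (Finset.univ.filter fun a : Fin m → ZMod Q =>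
          ∑ i ∈ S, a i = 0 ∧ ∑ i ∈ T, a i = 0).card) * Q ^ 2
        ≤ Q ^ (m + 1) + m.choose k * Q ^ m := by
    intro S hS
    rw [← Finset.add_sum_erase _ _ hS, add_mul, Finset.sum_mul]
    have hdiag : (Finset.univ.filter fun a : Fin m → ZMod Q =>
        ∑ i ∈ S, a i = 0 ∧ ∑ i ∈ S, a i = 0).card * Q ^ 2 = Q ^ (m + 1) := by
      have hSne : S.Nonempty := by
        have := (Finset.mem_powersetCard.1 hS).2
        exact Finset.card_pos.1 (this ▸ hk)
      obtain ⟨i0, hi0⟩ := hSne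
      have h1 := fiber1 Q m S i0 hi0 0
      have : (Finset.univ.filter fun a : Fin m → ZMod Q =>
          ∑ i ∈ S, a i = 0 ∧ ∑ i ∈ S, a i = 0)
          = Finset.univ.filter fun a : Fin m → ZMod Q => ∑ i ∈ S, a i = 0 := by
        refine Finset.filter_congr fun a _ => ?_
        simp
      rw [this, sq, ← mul_assoc, h1, ← pow_succ]
    have hoff : ∀ T ∈ 𝒮.erase S,
        (Finset.univ.filter fun a : Fin m → ZMod Q =>
          ∑ i ∈ S, a i = 0 ∧ ∑ i ∈ T, a i = 0).card * Q ^ 2 = Q ^ m := by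
      intro T hT
      have hTS : T ≠ S := Finset.ne_of_mem_erase hT
      have hT𝒮 := Finset.mem_of_mem_erase hT
      have hcS : S.card = k := (Finset.mem_powersetCard.1 hS).2
      have hcT : T.card = k := (Finset.mem_powersetCard.1 hT𝒮).2
      obtain ⟨iS, hiSS, hiST⟩ : ∃ x ∈ S, x ∉ T := by
        by_contra h
        push_neg at h
        exact hTS (Finset.eq_of_subset_of_card_le h (by rw [hcS, hcT])).symm
      obtain ⟨jT, hjT⟩ : T.Nonempty := Finset.card_pos.1 (hcT ▸ hk)
      exact fiber2 Q m S T iS jT hiSS hiST hjT 0 0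
    calc _ ≤ Q ^ (m + 1) + ∑ T ∈ 𝒮.erase S, Q ^ m := by
            rw [hdiag]
            gcongr with T hT
            exact le_of_eq (hoff T hT)
      _ ≤ Q ^ (m + 1) + m.choose k * Q ^ m := by
            rw [Finset.sum_const, smul_eq_mul]
            gcongr
            calc (𝒮.erase S).card ≤ 𝒮.card := Finset.card_erase_le
              _ = m.choose k := hr
  calc _ ≤ ∑ _S ∈ 𝒮, (Q ^ (m + 1) + m.choose k * Q ^ m) := Finset.sum_le_sum hbound
    _ = m.choose k * Q ^ (m + 1) + m.choose k ^ 2 * Q ^ m := by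
        rw [Finset.sum_const, smul_eq_mul, hr]; ring

end helpers

/-- For `Q ≥ 2` and `1 ≤ k ≤ m`, if `a_1, …, a_m` are i.i.d. uniform in
`ℤ/Qℤ` and `E_k` is the event that some `k` distinct indices have `a_{i_1}+⋯+a_{i_k} = 0`,
then `1 - Q/C(m,k) ≤ Pr[E_k] ≤ C(m,k)/Q`. -/
theorem stmt_6 (Q m k : ℕ) [NeZero Q] (hQ : 2 ≤ Q) (hk : 1 ≤ k) (hkm : k ≤ m) :
    1 - (Q : ℝ) / (m.choose k) ≤
      ((Finset.univ.filter (fun a : Fin m → ZMod Q =>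
          ∃ S : Finset (Fin m), S.card = k ∧ ∑ i ∈ S, a i = 0)).card : ℝ)
        / Fintype.card (Fin m → ZMod Q)
    ∧ ((Finset.univ.filter (fun a : Fin m → ZMod Q =>
          ∃ S : Finset (Fin m), S.card = k ∧ ∑ i ∈ S, a i = 0)).card : ℝ)
        / Fintype.card (Fin m → ZMod Q) ≤ (m.choose k : ℝ) / Q := by
  classical
  set 𝒮 := Finset.powersetCard k (Finset.univ : Finset (Fin m)) with h𝒮
  set N : (Fin m → ZMod Q) → ℕ :=
    fun a => (𝒮.filter fun S : Finset (Fin m) => ∑ i ∈ S, a i = 0).card with hN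
  set E := Finset.univ.filter (fun a : Fin m → ZMod Q =>
      ∃ S : Finset (Fin m), S.card = k ∧ ∑ i ∈ S, a i = 0) with hE
  have hcard : (Fintype.card (Fin m → ZMod Q) : ℝ) = (Q : ℝ) ^ m := by
    rw [Fintype.card_fun, ZMod.card, Fintype.card_fin]; push_cast; ring
  have hmemE : ∀ a : Fin m → ZMod Q, a ∈ E ↔ 0 < N a := by
    intro a
    rw [hE, Finset.mem_filter]
    simp only [Finset.mem_univ, true_and, hN, Finset.card_pos,
      Finset.filter_nonempty_iff]
    constructor
    · rintro ⟨S, h1, h2⟩; exact ⟨S, Finset.mem_powersetCard_univ.2 h1, h2⟩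
    · rintro ⟨S, h1, h2⟩; exact ⟨S, Finset.mem_powersetCard_univ.1 h1, h2⟩
  -- basic positivity
  have hr1 : 1 ≤ m.choose k := Nat.choose_pos hkm
  have hq0 : (0:ℝ) < Q := by positivity
  have hR0 : (0:ℝ) < m.choose k := by exact_mod_cast hr1
  have hP0 : (0:ℝ) < (Q:ℝ) ^ m := by positivity
  -- sum identities, cast to ℝ
  have hA : (∑ a : Fin m → ZMod Q, (N a : ℝ)) * Q = (m.choose k : ℝ) * (Q:ℝ) ^ m := by
    have := sumN Q m k hk
    exact_mod_cast congrArg (Nat.cast : ℕ → ℝ) this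
  have hB : (∑ a : Fin m → ZMod Q, (N a : ℝ) ^ 2) * (Q:ℝ) ^ 2
      ≤ (m.choose k : ℝ) * (Q:ℝ) ^ (m + 1) + (m.choose k : ℝ) ^ 2 * (Q:ℝ) ^ m := by
    have := sumN2 Q m k hk
    exact_mod_cast this
  -- upper bound
  have hupper : (E.card : ℝ) * Q ≤ (m.choose k : ℝ) * (Q:ℝ) ^ m := by
    have h1 : (E.card : ℝ) ≤ ∑ a : Fin m → ZMod Q, (N a : ℝ) := by
      calc (E.card : ℝ) = ∑ a ∈ E, (1:ℝ) := by simp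
        _ ≤ ∑ a ∈ E, (N a : ℝ) := by
            refine Finset.sum_le_sum fun a ha => ?_
            exact_mod_cast (hmemE a).1 ha
        _ ≤ ∑ a : Fin m → ZMod Q, (N a : ℝ) := by
            refine Finset.sum_le_sum_of_subset_of_nonneg (Finset.subset_univ _)
              fun a _ _ => by positivity
    calc (E.card : ℝ) * Q ≤ (∑ a : Fin m → ZMod Q, (N a : ℝ)) * Q := by
          exact mul_le_mul_of_nonneg_right h1 (le_of_lt hq0)
      _ = _ := hA
  -- Cauchy–Schwarz
  have hsumE : ∑ a ∈ E, (N a : ℝ) = ∑ a : Fin m → ZMod Q, (N a : ℝ) := by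
    rw [hE]
    refine Finset.sum_filter_of_ne fun a _ hna => ?_
    have : 0 < N a := by
      by_contra h
      exact hna (by simp [Nat.eq_zero_of_not_pos h])
    have := (hmemE a).2 this
    rw [hE, Finset.mem_filter] at this
    exact this.2
  have hCS : (∑ a : Fin m → ZMod Q, (N a : ℝ)) ^ 2
      ≤ (E.card : ℝ) * ∑ a : Fin m → ZMod Q, (N a : ℝ) ^ 2 := by
    calc (∑ a : Fin m → ZMod Q, (N a : ℝ)) ^ 2
        = (∑ a ∈ E, (N a : ℝ)) ^ 2 := by rw [hsumE]
      _ ≤ (E.card : ℝ) * ∑ a ∈ E, (N a : ℝ) ^ 2 := sq_sum_le_card_mul_sum_sq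
      _ ≤ (E.card : ℝ) * ∑ a : Fin m → ZMod Q, (N a : ℝ) ^ 2 := by
          refine mul_le_mul_of_nonneg_left ?_ (by positivity)
          refine Finset.sum_le_sum_of_subset_of_nonneg (Finset.subset_univ _)
            fun a _ _ => by positivity
  -- lower bound key inequality
  have hlower : (m.choose k : ℝ) * (Q:ℝ) ^ m ≤ (E.card : ℝ) * ((Q:ℝ) + m.choose k) := by
    have key : ((m.choose k : ℝ) * (Q:ℝ) ^ m) ^ 2
        ≤ (E.card : ℝ) * ((m.choose k : ℝ) * (Q:ℝ) ^ m) * ((Q:ℝ) + m.choose k) := by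
      calc ((m.choose k : ℝ) * (Q:ℝ) ^ m) ^ 2
          = (∑ a : Fin m → ZMod Q, (N a : ℝ)) ^ 2 * (Q:ℝ) ^ 2 := by
            rw [← hA]; ring
        _ ≤ ((E.card : ℝ) * ∑ a : Fin m → ZMod Q, (N a : ℝ) ^ 2) * (Q:ℝ) ^ 2 := by
            exact mul_le_mul_of_nonneg_right hCS (by positivity)
        _ = (E.card : ℝ) * ((∑ a : Fin m → ZMod Q, (N a : ℝ) ^ 2) * (Q:ℝ) ^ 2) := by ring
        _ ≤ (E.card : ℝ) * ((m.choose k : ℝ) * (Q:ℝ) ^ (m + 1)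
              + (m.choose k : ℝ) ^ 2 * (Q:ℝ) ^ m) := by
            exact mul_le_mul_of_nonneg_left hB (by positivity)
        _ = (E.card : ℝ) * ((m.choose k : ℝ) * (Q:ℝ) ^ m) * ((Q:ℝ) + m.choose k) := by
            rw [pow_succ]; ring
    have hpos : (0:ℝ) < (m.choose k : ℝ) * (Q:ℝ) ^ m := by positivity
    nlinarith [key, hpos]
  constructor
  · -- lower bound
    rw [hcard]
    have hqR : (0:ℝ) < (Q:ℝ) + m.choose k := by positivity
    have h7 : (m.choose k : ℝ) / ((Q:ℝ) + m.choose k) ≤ (E.card : ℝ) / (Q:ℝ) ^ m := by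
      rw [div_le_div_iff₀ hqR hP0]
      linarith [hlower]
    have h6 : 1 - (Q:ℝ) / m.choose k ≤ (m.choose k : ℝ) / ((Q:ℝ) + m.choose k) := by
      rw [sub_le_iff_le_add, div_add_div _ _ (ne_of_gt hqR) (ne_of_gt hR0),
        le_div_iff₀ (by positivity)]
      nlinarith [sq_nonneg (Q:ℝ)]
    linarith
  · -- upper bound
    rw [hcard, div_le_div_iff₀ hP0 hq0]
    linarith [hupper]
end

section
/- Let u and k be positive integers, let a_1, …, a_k be sampled independently and uniformly at random from the integer interval {−u, …, u}, and define p(k, s) := Pr[a_1 + ⋯ + a_k = s] for integers s. Then for every integer s ≥ 0, p(k, s+1) ≤ p(k, s). -/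
/-
Let `N_k(s)` count the `k`-tuples from `{-u, …, u}` with sum `s`. Negating a tuple shows that `N_k`
is even, and fixing the first coordinate gives `N_{k+1}(s) = ∑_{j = s-u}^{s+u} N_k(j)`, a window sum.
Sliding the window centred at `s ≥ 0` one step to the right trades `N_k(s-u)` for `N_k(s+u+1)`, and
`|s - u| ≤ s + u + 1`; so if `N_k` is even and non-increasing on `[0, ∞)`, then so is `N_{k+1}`.
Induction on `k`, starting from `N_0 = 𝟙_{0}`.
-/

/-- `pSum u k s` is the probability that the sum of `k` independent uniform random
integers from `{-u, …, u}` equals `s`. -/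
noncomputable def pSum (u k : ℕ) (s : ℤ) : ℝ :=
  (((Fintype.piFinset fun _ : Fin k => Finset.Icc (-(u : ℤ)) (u : ℤ)).filter
      (fun a : Fin k → ℤ => ∑ i, a i = s)).card : ℝ) / (2 * (u : ℝ) + 1) ^ k

open Finset

lemma Function.Even.le_of_abs_le {α : Type*} [Preorder α] {f : ℤ → α} (hf : f.Even)
    (hmono : AntitoneOn f (Set.Ici 0)) {a b : ℤ} (hab : |a| ≤ |b|) : f b ≤ f a := by
  have habs : ∀ x, f |x| = f x := fun x => by
    rcases abs_choice x with h | h <;> rw [h]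
    exact hf x
  rw [← habs a, ← habs b]
  exact hmono (abs_nonneg a) (abs_nonneg b) hab

lemma sum_Icc_sub_eq_sum_Icc {M : Type*} [AddCommMonoid M] (f : ℤ → M) (s : ℤ) (u : ℕ) :
    ∑ t ∈ Icc (-(u : ℤ)) u, f (s - t) = ∑ j ∈ Icc (s - u) (s + u), f j := by
  apply sum_nbij' (fun t => s - t) (fun j => s - j) <;>
    intros <;> (try simp only [mem_Icc] at *) <;> omega

section WindowSum

variable {M : Type*} [AddCommMonoid M] [PartialOrder M] [IsOrderedAddMonoid M] {f : ℤ → M}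

lemma sum_Icc_add_one_le_sum_Icc (hf : f.Even) (hmono : AntitoneOn f (Set.Ici 0)) (u : ℕ)
    {s : ℤ} (hs : 0 ≤ s) :
    ∑ j ∈ Icc (s + 1 - u) (s + 1 + u), f j ≤ ∑ j ∈ Icc (s - u) (s + u), f j := by
  have hleft : Icc (s - u) (s + u) = insert (s - u) (Icc (s + 1 - u) (s + u)) := by
    ext x; simp only [mem_Icc, mem_insert]; omega
  have hright : Icc (s + 1 - u) (s + 1 + u) = insert (s + u + 1) (Icc (s + 1 - u) (s + u)) := by
    ext x; simp only [mem_Icc, mem_insert]; omega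
  rw [hleft, hright, sum_insert (by simp only [mem_Icc]; omega),
    sum_insert (by simp only [mem_Icc]; omega)]
  gcongr
  exact hf.le_of_abs_le hmono (by rw [abs_of_nonneg (by omega : (0 : ℤ) ≤ s + u + 1)]; grind)

lemma antitoneOn_sum_Icc_sub (hf : f.Even) (hmono : AntitoneOn f (Set.Ici 0)) (u : ℕ) :
    AntitoneOn (fun s => ∑ t ∈ Icc (-(u : ℤ)) u, f (s - t)) (Set.Ici 0) := by
  refine antitoneOn_of_add_one_le Set.ordConnected_Ici fun s _ hs _ => ?_
  simp only [sum_Icc_sub_eq_sum_Icc]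
  exact sum_Icc_add_one_le_sum_Icc hf hmono u hs

end WindowSum

noncomputable def sumCount (u k : ℕ) (s : ℤ) : ℕ :=
  ((Fintype.piFinset fun _ : Fin k => Icc (-(u : ℤ)) u).filter (fun a => ∑ i, a i = s)).card

lemma pSum_eq (u k : ℕ) (s : ℤ) : pSum u k s = sumCount u k s / (2 * (u : ℝ) + 1) ^ k := rfl

lemma sumCount_zero (u : ℕ) (s : ℤ) : sumCount u 0 s = if s = 0 then 1 else 0 := by
  rcases eq_or_ne s 0 with rfl | h
  · simp [sumCount, filter_true_of_mem]
  · simp [sumCount, h, h.symm]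

lemma sumCount_even (u k : ℕ) : (sumCount u k).Even := fun s => by
  apply card_nbij' (fun a => -a) (fun a => -a)
  all_goals
    intro a ha
    simp only [coe_filter, Fintype.mem_piFinset, mem_Icc, Set.mem_ofPred_eq] at ha ⊢
  · refine ⟨fun i => by have := ha.1 i; simp only [Pi.neg_apply]; omega, ?_⟩
    simp [sum_neg_distrib, ha.2]
  · refine ⟨fun i => by have := ha.1 i; simp only [Pi.neg_apply]; omega, ?_⟩
    simp [sum_neg_distrib, ha.2]
  · exact neg_neg a
  · exact neg_neg a

lemma sumCount_succ (u k : ℕ) (s : ℤ) :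
    sumCount u (k + 1) s = ∑ t ∈ Icc (-(u : ℤ)) u, sumCount u k (s - t) := by
  rw [sumCount, card_eq_sum_card_fiberwise (f := fun a => a 0) (t := Icc (-(u : ℤ)) u)
    fun a ha => by simp only [coe_filter, Fintype.mem_piFinset] at ha; exact ha.1 0]
  refine sum_congr rfl fun t ht => card_nbij' Fin.tail (fun b => Fin.cons t b) ?_ ?_ ?_ ?_
  · intro a ha
    simp only [coe_filter, mem_filter, Fintype.mem_piFinset, Fin.sum_univ_succ,
      Set.mem_ofPred_eq] at ha ⊢
    obtain ⟨⟨hmem, hsum⟩, rfl⟩ := ha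
    exact ⟨fun i => hmem i.succ, by simp only [Fin.tail]; omega⟩
  · intro b hb
    simp only [coe_filter, mem_filter, Fintype.mem_piFinset, Fin.sum_univ_succ, Fin.cons_zero,
      Fin.cons_succ, Set.mem_ofPred_eq] at hb ⊢
    exact ⟨⟨Fin.cases ht hb.1, by omega⟩, trivial⟩
  · intro a ha
    simp only [coe_filter, mem_filter, Set.mem_ofPred_eq] at ha
    rw [← ha.2]
    exact Fin.cons_self_tail a
  · intro b _
    exact Fin.tail_cons (α := fun _ => ℤ) t b

lemma antitoneOn_sumCount (u k : ℕ) : AntitoneOn (sumCount u k) (Set.Ici 0) := by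
  induction k with
  | zero =>
    intro a _ b hb hab
    simp only [sumCount_zero]
    split_ifs <;> simp_all only [Set.mem_Ici] <;> omega
  | succ k ih =>
    rw [funext (sumCount_succ u k)]
    exact antitoneOn_sum_Icc_sub (sumCount_even u k) ih u

theorem stmt_9_general (u k : ℕ) (s : ℤ) (hs : 0 ≤ s) :
    pSum u k (s + 1) ≤ pSum u k s := by
  rw [pSum_eq, pSum_eq]
  gcongr
  exact antitoneOn_sumCount u k hs (by simp only [Set.mem_Ici]; omega) (by omega)

/-- For positive integers `u, k` and every integer `s ≥ 0`,
`p(k, s+1) ≤ p(k, s)`. -/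
theorem stmt_9 (u k : ℕ) (hu : 1 ≤ u) (hk : 1 ≤ k) (s : ℤ) (hs : 0 ≤ s) :
    pSum u k (s + 1) ≤ pSum u k s :=
  stmt_9_general u k s hs
end

section
/- Let u and k be positive integers, let a_1, …, a_k be sampled independently and uniformly at random from the integer interval {−u, …, u}, and define p(k, s) := Pr[a_1 + ⋯ + a_k = s]. Then for every integer s, p(k, s) ≤ p(k, 0). In particular, for Q := 2u+1 and any integer ℓ, p(k, ℓQ) ≤ p(k, 0). -/
/-!
Call `f : ℤ → α` radially antitone if `f t ≤ f s` whenever `|s| ≤ |t|`, i.e. `f` is even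
and nonincreasing on `ℕ`. The number `N k s` of `k`-tuples from `{-u, …, u}` with sum `s`
satisfies `N (k + 1) s = ∑_{|x| ≤ u} N k (s - x)`, a window sum of `N k` of width `2u + 1`.
A window sum of a radially antitone function is again radially antitone: reflecting the window
preserves its sum, and moving it from `[n - u, n + u]` to `[n + 1 - u, n + 1 + u]` with `n ≥ 0`
exchanges `f (n - u)` for the no larger `f (n + 1 + u)`. By induction on `k`, `N k` peaks at `0`.
-/

open Finset

section TupleSumCount

variable {G : Type*} [AddCommGroup G] [DecidableEq G]

def tupleSumCount (S : Finset G) (k : ℕ) (s : G) : ℕ :=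
  #{a ∈ Fintype.piFinset fun _ : Fin k => S | ∑ i, a i = s}

theorem tupleSumCount_zero (S : Finset G) (s : G) :
    tupleSumCount S 0 s = if s = 0 then 1 else 0 := by
  unfold tupleSumCount
  split_ifs with hs <;> simp [hs, eq_comm]

theorem tupleSumCount_succ (S : Finset G) (k : ℕ) (s : G) :
    tupleSumCount S (k + 1) s = ∑ x ∈ S, tupleSumCount S k (s - x) := by
  simp only [tupleSumCount]
  rw [← card_sigma]
  refine card_nbij' (fun a => ⟨a 0, Fin.tail a⟩) (fun p => Fin.cons p.1 p.2) ?_ ?_ ?_ ?_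
  · intro a ha
    simp only [coe_filter, coe_sigma, Set.mem_ofPred_eq, Set.mem_sigma_iff,
      Fintype.mem_piFinset, Fin.sum_univ_succ] at ha ⊢
    exact ⟨ha.1 0, fun i => ha.1 i.succ, by rw [← ha.2]; simp [Fin.tail]⟩
  · intro p hp
    simp only [coe_filter, coe_sigma, Set.mem_ofPred_eq, Set.mem_sigma_iff,
      Fintype.mem_piFinset, Fin.sum_univ_succ] at hp ⊢
    refine ⟨Fin.cases hp.1 hp.2.1, ?_⟩
    simp [hp.2.2]
  · intro a _; simp
  · intro p _; simp

end TupleSumCount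

theorem sum_Icc_neg_natCast_eq_sum_range {M : Type*} [AddCommMonoid M] (h : ℤ → M) (u : ℕ) :
    ∑ x ∈ Icc (-(u : ℤ)) u, h x = ∑ i ∈ range (2 * u + 1), h (u - i) := by
  refine sum_nbij' (fun x => (u - x).toNat) (fun i => u - i) ?_ ?_ ?_ ?_ ?_
  all_goals
    intro x hx
    simp only [mem_Icc, mem_range] at hx ⊢
    first | omega | congr 1; omega

def IsRadiallyAntitone {α : Type*} [Preorder α] (f : ℤ → α) : Prop :=
  ∀ ⦃s t : ℤ⦄, |s| ≤ |t| → f t ≤ f s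

namespace IsRadiallyAntitone

variable {α : Type*} {f : ℤ → α}

theorem apply_neg [PartialOrder α] (hf : IsRadiallyAntitone f) (s : ℤ) : f (-s) = f s :=
  le_antisymm (hf (abs_neg s).ge) (hf (abs_neg s).le)

theorem of_apply_neg_of_succ_le [Preorder α] (hneg : ∀ s, f (-s) = f s)
    (hsucc : ∀ n : ℕ, f (n + 1) ≤ f n) : IsRadiallyAntitone f := by
  have hanti : Antitone fun n : ℕ => f n := antitone_nat_of_succ_le (by exact_mod_cast hsucc)
  have hnatAbs : ∀ s, f s = f s.natAbs := fun s => by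
    rcases Int.natAbs_eq s with h | h <;> nth_rw 1 [h]
    exact hneg _
  intro s t hst
  rw [hnatAbs s, hnatAbs t]
  rw [Int.abs_eq_natAbs, Int.abs_eq_natAbs] at hst
  exact hanti (mod_cast hst)

theorem sum_Icc_sub [AddCommMonoid α] [PartialOrder α] [IsOrderedAddMonoid α]
    (hf : IsRadiallyAntitone f) (u : ℕ) :
    IsRadiallyAntitone fun s => ∑ x ∈ Icc (-(u : ℤ)) u, f (s - x) := by
  simp only [sum_Icc_neg_natCast_eq_sum_range]
  refine of_apply_neg_of_succ_le (fun s => ?_) (fun n => ?_)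
  · rw [← sum_range_reflect]
    refine sum_congr rfl fun i hi => ?_
    rw [← hf.apply_neg]
    congr 1
    rw [mem_range] at hi
    omega
  · -- the shifted window trades `f (n - u)` for `f (n + 1 + u)`, and `|n - u| ≤ n + 1 + u`
    rw [sum_range_succ, sum_range_succ']
    refine add_le_add (le_of_eq (sum_congr rfl fun i _ => ?_)) (hf ?_)
    · push_cast; ring_nf
    · apply abs_le_abs <;> push_cast <;> omega

end IsRadiallyAntitone

theorem isRadiallyAntitone_tupleSumCount_zero (S : Finset ℤ) :
    IsRadiallyAntitone (tupleSumCount S 0) := by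
  intro s t hst
  simp only [tupleSumCount_zero]
  split_ifs <;> simp_all

theorem isRadiallyAntitone_tupleSumCount_Icc (u k : ℕ) :
    IsRadiallyAntitone (tupleSumCount (Icc (-(u : ℤ)) u) k) := by
  induction k with
  | zero => exact isRadiallyAntitone_tupleSumCount_zero _
  | succ k ih =>
    rw [funext (tupleSumCount_succ (Icc (-(u : ℤ)) u) k)]
    exact ih.sum_Icc_sub u

theorem pSum_eq_tupleSumCount (u k : ℕ) (s : ℤ) :
    pSum u k s = tupleSumCount (Icc (-(u : ℤ)) u) k s / (2 * (u : ℝ) + 1) ^ k :=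
  rfl

theorem stmt_12_general (u k : ℕ) :
    (∀ s : ℤ, pSum u k s ≤ pSum u k 0)
    ∧ ∀ ℓ : ℤ, pSum u k (ℓ * (2 * (u : ℤ) + 1)) ≤ pSum u k 0 := by
  have h (s : ℤ) : pSum u k s ≤ pSum u k 0 := by
    rw [pSum_eq_tupleSumCount, pSum_eq_tupleSumCount]
    gcongr
    exact isRadiallyAntitone_tupleSumCount_Icc u k (abs_zero.trans_le (abs_nonneg s))
  exact ⟨h, fun ℓ => h _⟩

/-- For positive integers `u, k`, `p(k, s) ≤ p(k, 0)` for every integer `s`;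
in particular, for `Q := 2u+1` and any integer `ℓ`, `p(k, ℓQ) ≤ p(k, 0)`. -/
theorem stmt_12 (u k : ℕ) (hu : 1 ≤ u) (hk : 1 ≤ k) :
    (∀ s : ℤ, pSum u k s ≤ pSum u k 0)
    ∧ ∀ ℓ : ℤ, pSum u k (ℓ * (2 * (u : ℤ) + 1)) ≤ pSum u k 0 :=
  stmt_12_general u k
end

section
/- Let F be a field, let d ≥ 1, and let b_1, …, b_{d+2} ∈ F. Let M be the (d+1)×(d+1) matrix whose (e, j) entry, for 1 ≤ j ≤ d+1, is b_j^e − b_{d+2}^e when 1 ≤ e ≤ d, and is b_j^{d+2} − b_{d+2}^{d+2} when e = d+1 (i.e., column j is f(b_j) − f(b_{d+2}) where f(x) = (x, x², …, x^d, x^{d+2})). Then det(M) = (−1)^{d+1} · (b_1 + ⋯ + b_{d+2}) · ∏_{1 ≤ i < j ≤ d+2} (b_j − b_i). In particular, det(M) = 0 if and only if b_i = b_j for some i ≠ j or b_1 + ⋯ + b_{d+2} = 0. -/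
/-!
Adjoining the row `(1, …, 1)` and subtracting the last column from the others shows that
`det M` is, up to the sign `(-1)^(d+1)`, the determinant of the Vandermonde-type matrix of `b`
with exponents `0, 1, …, d, d + 2`. Expanding the Vandermonde determinant of
`(-X, b_1, …, b_m)` along its first row, the coefficient of `X^k` is the determinant of the
Vandermonde-type matrix omitting exponent `k`; by the product formula the same coefficient is
`e_{m-k}(b) · ∏_{i<j} (b_j - b_i)`. For `k = m - 1` this symmetric function is `b_1 + ⋯ + b_m`.
-/

open Polynomial Finset

theorem Multiset.esymm_one {R : Type*} [CommSemiring R] (s : Multiset R) : s.esymm 1 = s.sum := by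
  simp [Multiset.esymm, Multiset.powersetCard_one, Multiset.map_map]

namespace Matrix

variable {R : Type*} [CommRing R] {n : ℕ}

theorem det_sub_last_col_eq_of_row_zero_eq_one (A : Matrix (Fin (n + 1)) (Fin (n + 1)) R)
    (hA : ∀ j, A 0 j = 1) :
    (of fun i j : Fin n => A i.succ j.castSucc - A i.succ (Fin.last n)).det = (-1) ^ n * A.det := by
  set B : Matrix (Fin (n + 1)) (Fin (n + 1)) R :=
    of fun i j => A i j + (if j = Fin.last n then 0 else -1) * A i (Fin.last n)
  have hB : B.det = A.det := by
    simpa using det_eq_of_forall_row_eq_smul_add_const (A := Bᵀ) (B := Aᵀ)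
      (fun j => if j = Fin.last n then 0 else -1) (Fin.last n) (by simp) (fun _ _ => rfl)
  have hB0 : ∀ j, B 0 j = if j = Fin.last n then 1 else 0 := by
    intro j
    by_cases hj : j = Fin.last n <;> simp [B, hA, hj]
  rw [← hB, det_succ_row_zero, sum_eq_single (Fin.last n) (fun j _ hj => by simp [hB0, hj])
    (by simp), hB0, if_pos rfl, mul_one, Fin.val_last, ← mul_assoc, ← pow_add,
    Even.neg_one_pow ⟨n, rfl⟩, one_mul]
  congr 1
  ext i j
  simp [B, Fin.succAbove_last, (Fin.castSucc_lt_last j).ne, sub_eq_add_neg]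

def vandermondeSkip (v : Fin (n + 1) → R) (k : Fin (n + 2)) :
    Matrix (Fin (n + 1)) (Fin (n + 1)) R :=
  of fun i j => v i ^ (k.succAbove j : ℕ)

theorem det_vandermonde_cons_neg_X_eq_sum (v : Fin (n + 1) → R) :
    (vandermonde (Fin.cons (-X) fun i => C (v i) : Fin (n + 2) → R[X])).det
      = ∑ k : Fin (n + 2), C (vandermondeSkip v k).det * X ^ (k : ℕ) := by
  rw [det_succ_row_zero]
  refine sum_congr rfl fun k _ => ?_
  have hminor : (vandermonde (Fin.cons (-X) fun i => C (v i) : Fin (n + 2) → R[X])).submatrix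
      Fin.succ k.succAbove = C.mapMatrix (vandermondeSkip v k) := by
    ext i j : 1
    simp only [submatrix_apply, vandermonde_apply, Fin.cons_succ, RingHom.mapMatrix_apply,
      map_apply, vandermondeSkip, of_apply, map_pow]
  -- the Laplace sign `(-1)^k` cancels against the sign of `(-X)^k`
  rw [hminor, ← RingHom.map_det, vandermonde_apply, Fin.cons_zero, neg_pow (X : R[X]),
    ← mul_assoc, ← pow_add, Even.neg_one_pow ⟨_, rfl⟩, one_mul, mul_comm]

theorem det_vandermonde_cons_neg_X_eq_prod (v : Fin (n + 1) → R) :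
    (vandermonde (Fin.cons (-X) fun i => C (v i) : Fin (n + 2) → R[X])).det
      = (∏ i, (X + C (v i))) * C (vandermonde v).det := by
  rw [det_vandermonde, det_vandermonde, Fin.prod_univ_succ, Fin.prod_Ioi_zero, map_prod]
  congr 1
  · simp [add_comm]
  · refine prod_congr rfl fun i _ => ?_
    simp [Fin.prod_Ioi_succ, map_prod]

theorem det_vandermondeSkip (v : Fin (n + 1) → R) (k : Fin (n + 2)) :
    (vandermondeSkip v k).det = (univ.val.map v).esymm (n + 1 - k) * (vandermonde v).det := by
  have h := congrArg (coeff · k)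
    ((det_vandermonde_cons_neg_X_eq_sum v).symm.trans (det_vandermonde_cons_neg_X_eq_prod v))
  simp only [finsetSum_coeff, coeff_C_mul_X_pow, coeff_mul_C] at h
  rw [sum_eq_single k (fun j _ hj => if_neg (Fin.val_ne_of_ne hj).symm) (by simp), if_pos rfl] at h
  rw [h, prod_X_add_C_coeff _ _ (by simpa using k.is_le), Finset.esymm_map_val, card_univ,
    Fintype.card_fin]

end Matrix

theorem stmt_16_general (F : Type*) [Field F] (d : ℕ) (b : Fin (d + 2) → F) :
    (Matrix.of fun e j : Fin (d + 1) =>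
        b (Fin.castSucc j) ^ (if (e : ℕ) < d then (e : ℕ) + 1 else d + 2)
          - b (Fin.last (d + 1)) ^ (if (e : ℕ) < d then (e : ℕ) + 1 else d + 2)).det
      = (-1 : F) ^ (d + 1) * (∑ i, b i) * ∏ i : Fin (d + 2), ∏ j ∈ Finset.Ioi i, (b j - b i)
    ∧ ((Matrix.of fun e j : Fin (d + 1) =>
        b (Fin.castSucc j) ^ (if (e : ℕ) < d then (e : ℕ) + 1 else d + 2)
          - b (Fin.last (d + 1)) ^ (if (e : ℕ) < d then (e : ℕ) + 1 else d + 2)).det = 0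
      ↔ (∃ i j, i ≠ j ∧ b i = b j) ∨ ∑ i, b i = 0) := by
  set S := (Matrix.vandermondeSkip b (Fin.last (d + 1)).castSucc).transpose
  have hexp (e : Fin (d + 1)) :
      ((Fin.last (d + 1)).castSucc.succAbove e.succ : ℕ)
        = if (e : ℕ) < d then (e : ℕ) + 1 else d + 2 := by
    simp only [Fin.succAbove, Fin.lt_def, Fin.val_castSucc, Fin.val_succ, Fin.val_last]
    split_ifs <;> simp <;> omega
  have hdet : (Matrix.of fun e j : Fin (d + 1) =>
        b (Fin.castSucc j) ^ (if (e : ℕ) < d then (e : ℕ) + 1 else d + 2)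
          - b (Fin.last (d + 1)) ^ (if (e : ℕ) < d then (e : ℕ) + 1 else d + 2)).det
      = (-1 : F) ^ (d + 1) * (∑ i, b i) * (Matrix.vandermonde b).det := by
    calc _ = (Matrix.of fun e j : Fin (d + 1) =>
            S e.succ j.castSucc - S e.succ (Fin.last _)).det := by
          simp only [S, Matrix.vandermondeSkip, Matrix.transpose_apply, Matrix.of_apply, hexp]
      _ = (-1) ^ (d + 1) * (Matrix.vandermondeSkip b (Fin.last (d + 1)).castSucc).det := by
          rw [Matrix.det_sub_last_col_eq_of_row_zero_eq_one S (by simp [S, Matrix.vandermondeSkip]),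
            Matrix.det_transpose]
      _ = _ := by
          rw [Matrix.det_vandermondeSkip, Fin.val_castSucc, Fin.val_last, Nat.add_sub_cancel_left,
            Multiset.esymm_one, mul_assoc]
          rfl
  refine ⟨by rw [hdet, Matrix.det_vandermonde], ?_⟩
  rw [hdet]
  simp [Matrix.det_vandermonde_eq_zero_iff, or_comm, and_comm]

/-- Over a field `F` and `d ≥ 1`, consider the `(d+1) × (d+1)` matrix `M`
whose column `j` (for `j = 1, …, d+1`) is `f(b_j) - f(b_{d+2})`, where
`f(x) = (x, x², …, x^d, x^{d+2})` (exponents `1, …, d` and then `d+2`). Then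
`det M = (-1)^{d+1} · (b_1 + ⋯ + b_{d+2}) · ∏_{i<j} (b_j - b_i)`; in particular `det M = 0`
iff `b_i = b_j` for some `i ≠ j` or `b_1 + ⋯ + b_{d+2} = 0`. -/
theorem stmt_16 (F : Type*) [Field F] (d : ℕ) (hd : 1 ≤ d) (b : Fin (d + 2) → F) :
    (Matrix.of fun e j : Fin (d + 1) =>
        b (Fin.castSucc j) ^ (if (e : ℕ) < d then (e : ℕ) + 1 else d + 2)
          - b (Fin.last (d + 1)) ^ (if (e : ℕ) < d then (e : ℕ) + 1 else d + 2)).det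
      = (-1 : F) ^ (d + 1) * (∑ i, b i) * ∏ i : Fin (d + 2), ∏ j ∈ Finset.Ioi i, (b j - b i)
    ∧ ((Matrix.of fun e j : Fin (d + 1) =>
        b (Fin.castSucc j) ^ (if (e : ℕ) < d then (e : ℕ) + 1 else d + 2)
          - b (Fin.last (d + 1)) ^ (if (e : ℕ) < d then (e : ℕ) + 1 else d + 2)).det = 0
      ↔ (∃ i j, i ≠ j ∧ b i = b j) ∨ ∑ i, b i = 0) :=
  stmt_16_general F d b
end

section
/- Let Q be a prime, let d ≥ 1, and define f_d : ℤ/Qℤ → (ℤ/Qℤ)^{d+1} by f_d(a) := (a, a², a³, …, a^d, a^{d+2}). Then for any a_1, …, a_{d+2} ∈ ℤ/Qℤ, the d+2 points f_d(a_1), …, f_d(a_{d+2}) all lie in some affine subspace of (ℤ/Qℤ)^{d+1} of dimension at most d (i.e., a d-dimensional affine hyperplane) if and only if a_i = a_j for some i ≠ j, or a_1 + ⋯ + a_{d+2} = 0 in ℤ/Qℤ. -/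
/-!
Points `y i` lie in a coset of a subspace of codimension at least one iff some nonzero functional
`c ⬝ᵥ ·` is constant on them. For `y i = f_d(a i)` this says that the `a i` are roots of the
nonzero polynomial `∑ₑ cₑ X^(gapExp d e) - t`, and these polynomials are exactly the nonzero ones of
degree at most `d + 2` without `X^(d+1)` term. If the `a i` are distinct, such a polynomial is a
nonzero multiple of `∏ᵢ (X - a i)`, whose `X^(d+1)` coefficient is `-∑ᵢ a i`. Conversely,
`∏ᵢ (X - b i)` works for any `b` with `∑ᵢ b i = 0` taking every value of `a`; if `a i = a j` with
`i ≠ j`, subtracting `∑ₖ a k` from `a j` produces such a `b`.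
-/

open Polynomial Module

section AffineHyperplane

variable {K V ι : Type*} [Field K] [AddCommGroup V] [Module K V] [FiniteDimensional K V]

theorem exists_sub_mem_finrank_lt_iff (x : ι → V) :
    (∃ (v : V) (W : Submodule K V), finrank K W < finrank K V ∧ ∀ i, x i - v ∈ W) ↔
      ∃ φ : Dual K V, φ ≠ 0 ∧ ∃ t, ∀ i, φ (x i) = t := by
  constructor
  · rintro ⟨v, W, hW, hx⟩
    have hW_lt : W < ⊤ := lt_top_iff_ne_top.2 fun h => by rw [h, finrank_top] at hW; exact hW.false
    obtain ⟨φ, hφ, hker⟩ := W.exists_dual_map_eq_bot_of_lt_top hW_lt inferInstance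
    refine ⟨φ, hφ, φ v, fun i => ?_⟩
    have : φ (x i - v) = 0 := by simpa [hker] using Submodule.mem_map_of_mem (f := φ) (hx i)
    rwa [map_sub, sub_eq_zero] at this
  · rintro ⟨φ, hφ, t, ht⟩
    obtain ⟨v, rfl⟩ := LinearMap.surjective_of_ne_zero hφ t
    refine ⟨v, LinearMap.ker φ, Submodule.finrank_lt ?_, fun i => by simp [ht]⟩
    rwa [Ne, LinearMap.ker_eq_top]

theorem exists_sub_mem_finrank_lt_card_iff {n : Type*} [Fintype n] [DecidableEq n]
    (x : ι → n → K) :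
    (∃ (v : n → K) (W : Submodule K (n → K)), finrank K W < Fintype.card n ∧ ∀ i, x i - v ∈ W) ↔
      ∃ c : n → K, c ≠ 0 ∧ ∃ t, ∀ i, c ⬝ᵥ x i = t := by
  rw [← finrank_fintype_fun_eq_card K, exists_sub_mem_finrank_lt_iff]
  constructor
  · rintro ⟨φ, hφ, t, ht⟩
    obtain ⟨c, rfl⟩ := (dotProductEquiv K n).surjective φ
    exact ⟨c, fun hc => hφ (by simp [hc]), t, ht⟩
  · rintro ⟨c, hc, t, ht⟩
    exact ⟨dotProductEquiv K n c, (map_ne_zero_iff _ (dotProductEquiv K n).injective).2 hc, t, ht⟩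

end AffineHyperplane

section GapCurve

variable {K ι : Type*} [Field K] {d : ℕ}

def gapExp (d : ℕ) (e : Fin (d + 1)) : ℕ := if (e : ℕ) < d then e + 1 else d + 2

/-- The curve `f_d(x) = (x, x², …, x^d, x^(d+2))`. -/
def gapCurve (d : ℕ) (x : K) : Fin (d + 1) → K := fun e => x ^ gapExp d e

noncomputable def gapPoly (c : Fin (d + 1) → K) : K[X] := ∑ e, monomial (gapExp d e) (c e)

theorem gapExp_injective : Function.Injective (gapExp d) := by
  intro e e' h
  unfold gapExp at h
  ext
  split_ifs at h <;> omega

theorem gapExp_ne_zero (e : Fin (d + 1)) : gapExp d e ≠ 0 := by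
  unfold gapExp; split_ifs <;> omega

theorem gapExp_ne_succ (e : Fin (d + 1)) : gapExp d e ≠ d + 1 := by
  have := e.isLt
  unfold gapExp; split_ifs <;> omega

theorem gapExp_le (e : Fin (d + 1)) : gapExp d e ≤ d + 2 := by
  unfold gapExp; split_ifs <;> omega

theorem sum_range_eq_add_sum_gapExp {M : Type*} [AddCommMonoid M] (g : ℕ → M) :
    ∑ n ∈ Finset.range (d + 3), g n = g 0 + g (d + 1) + ∑ e, g (gapExp d e) := by
  simp only [Fin.sum_univ_castSucc, gapExp, Fin.val_castSucc, Fin.is_lt, if_true, Fin.val_last,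
    lt_irrefl, if_false]
  rw [Fin.sum_univ_eq_sum_range (fun i => g (i + 1)), Finset.sum_range_succ,
    Finset.sum_range_succ, Finset.sum_range_succ']
  abel

theorem eval_gapPoly (c : Fin (d + 1) → K) (x : K) : (gapPoly c).eval x = c ⬝ᵥ gapCurve d x := by
  simp [gapPoly, gapCurve, dotProduct, eval_finsetSum]

theorem coeff_gapPoly_gapExp (c : Fin (d + 1) → K) (e : Fin (d + 1)) :
    (gapPoly c).coeff (gapExp d e) = c e := by
  simp [gapPoly, coeff_monomial, gapExp_injective.eq_iff]

theorem coeff_gapPoly_of_forall_ne (c : Fin (d + 1) → K) {m : ℕ} (hm : ∀ e, gapExp d e ≠ m) :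
    (gapPoly c).coeff m = 0 := by
  simp [gapPoly, coeff_monomial, hm]

theorem natDegree_gapPoly_le (c : Fin (d + 1) → K) : (gapPoly c).natDegree ≤ d + 2 :=
  natDegree_sum_le_of_forall_le _ _ fun e _ => (natDegree_monomial_le _).trans (gapExp_le e)

theorem eq_gapPoly_add_C {p : K[X]} (hdeg : p.natDegree ≤ d + 2) (hcoeff : p.coeff (d + 1) = 0) :
    p = gapPoly (fun e => p.coeff (gapExp d e)) + C (p.coeff 0) := by
  conv_lhs => rw [as_sum_range' p (d + 3) (by omega), sum_range_eq_add_sum_gapExp]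
  rw [hcoeff, monomial_zero_right, add_zero, add_comm, monomial_zero_left]
  rfl

theorem exists_dotProduct_gapCurve_iff [Nonempty ι] (x : ι → K) :
    (∃ c : Fin (d + 1) → K, c ≠ 0 ∧ ∃ t, ∀ i, c ⬝ᵥ gapCurve d (x i) = t) ↔
      ∃ p : K[X], p ≠ 0 ∧ p.natDegree ≤ d + 2 ∧ p.coeff (d + 1) = 0 ∧ ∀ i, p.eval (x i) = 0 := by
  constructor
  · rintro ⟨c, hc, t, ht⟩
    obtain ⟨e, he⟩ := Function.ne_iff.1 hc
    refine ⟨gapPoly c - C t, fun h => he ?_, ?_, ?_, fun i => by simp [eval_gapPoly, ht]⟩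
    · simpa [coeff_gapPoly_gapExp, coeff_C, gapExp_ne_zero] using congr_arg (coeff · (gapExp d e)) h
    · exact (natDegree_sub_le _ _).trans (by simpa using natDegree_gapPoly_le c)
    · simp [coeff_gapPoly_of_forall_ne c gapExp_ne_succ]
  · rintro ⟨p, hp0, hdeg, hcoeff, hp⟩
    have hp_eq := eq_gapPoly_add_C hdeg hcoeff
    refine ⟨fun e => p.coeff (gapExp d e), fun hc => hp0 ?_, -p.coeff 0, fun i => ?_⟩
    · have hp_C : p = C (p.coeff 0) := by rw [hc] at hp_eq; simpa [gapPoly] using hp_eq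
      obtain ⟨i⟩ := ‹Nonempty ι›
      have h0 := hp i
      rw [hp_C, eval_C] at h0
      rw [hp_C, h0, C_0]
    · have := hp i
      rw [hp_eq, eval_add, eval_gapPoly, eval_C] at this
      exact eq_neg_of_add_eq_zero_left this

end GapCurve

section ProdXSubC

variable {K ι : Type*} [Field K] [Fintype ι]

theorem eq_C_leadingCoeff_mul_prod_X_sub_C {a : ι → K} (ha : Function.Injective a) {p : K[X]}
    (hdeg : p.natDegree ≤ Fintype.card ι) (hp : ∀ i, p.eval (a i) = 0) :
    p = C p.leadingCoeff * ∏ i, (X - C (a i)) := by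
  classical
  refine eq_leadingCoeff_mul_of_monic_of_dvd_of_natDegree_le (monic_prod_X_sub_C a _)
    (Fintype.prod_dvd_of_coprime (pairwise_coprime_X_sub_C ha) fun i => dvd_iff_isRoot.2 (hp i)) ?_
  rwa [natDegree_finsetProd_X_sub_C_eq_card, Finset.card_univ]

theorem exists_sum_eq_zero_range_subset_of_not_injective {G : Type*} [AddCommGroup G]
    [DecidableEq ι] {a : ι → G} (ha : ¬Function.Injective a) :
    ∃ b : ι → G, ∑ i, b i = 0 ∧ Set.range a ⊆ Set.range b := by
  obtain ⟨i, j, hij, hne⟩ := Function.not_injective_iff.1 ha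
  refine ⟨a - Pi.single j (∑ k, a k), by simp [Finset.sum_sub_distrib], ?_⟩
  rintro _ ⟨k, rfl⟩
  by_cases hk : k = j
  · exact ⟨i, by simp [hne, hk, hij]⟩
  · exact ⟨k, by simp [hk]⟩

variable {n : ℕ}

theorem sum_eq_zero_of_eval_eq_zero {a : Fin (n + 1) → K} (ha : Function.Injective a) {p : K[X]}
    (hp0 : p ≠ 0) (hdeg : p.natDegree ≤ n + 1) (hcoeff : p.coeff n = 0)
    (hp : ∀ i, p.eval (a i) = 0) : ∑ i, a i = 0 := by
  have hfac := eq_C_leadingCoeff_mul_prod_X_sub_C ha (by simpa using hdeg) hp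
  have hq : (∏ i, (X - C (a i))).coeff n = -∑ i, a i := by
    simpa using prod_X_sub_C_coeff_card_pred Finset.univ a (by simp)
  rw [hfac, coeff_C_mul, hq] at hcoeff
  simpa [hp0] using hcoeff

theorem exists_ne_zero_eval_eq_zero_iff (a : Fin (n + 1) → K) :
    (∃ p : K[X], p ≠ 0 ∧ p.natDegree ≤ n + 1 ∧ p.coeff n = 0 ∧ ∀ i, p.eval (a i) = 0) ↔
      ¬Function.Injective a ∨ ∑ i, a i = 0 := by
  classical
  constructor
  · rintro ⟨p, hp0, hdeg, hcoeff, hp⟩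
    exact or_iff_not_imp_left.2 fun ha =>
      sum_eq_zero_of_eval_eq_zero (not_not.1 ha) hp0 hdeg hcoeff hp
  suffices ∀ b : Fin (n + 1) → K, ∑ i, b i = 0 → Set.range a ⊆ Set.range b →
      ∃ p : K[X], p ≠ 0 ∧ p.natDegree ≤ n + 1 ∧ p.coeff n = 0 ∧ ∀ i, p.eval (a i) = 0 by
    rintro (ha | ha)
    · obtain ⟨b, hb, hab⟩ := exists_sum_eq_zero_range_subset_of_not_injective ha
      exact this b hb hab
    · exact this a ha subset_rfl
  intro b hb hab
  refine ⟨∏ i, (X - C (b i)), (monic_prod_X_sub_C b _).ne_zero,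
    by simp [natDegree_finsetProd_X_sub_C_eq_card], ?_, fun i => ?_⟩
  · simpa [hb] using prod_X_sub_C_coeff_card_pred Finset.univ b (by simp)
  · obtain ⟨k, hk⟩ := hab ⟨i, rfl⟩
    rw [← hk, eval_prod]
    exact Finset.prod_eq_zero (Finset.mem_univ k) (by simp)

end ProdXSubC

theorem stmt_17_general (Q : ℕ) (hQ : Q.Prime) (d : ℕ)
    (a : Fin (d + 2) → ZMod Q) :
    (∃ (v : Fin (d + 1) → ZMod Q) (W : Submodule (ZMod Q) (Fin (d + 1) → ZMod Q)),
        Module.finrank (ZMod Q) W ≤ d ∧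
        ∀ i, (fun e : Fin (d + 1) =>
            a i ^ (if (e : ℕ) < d then (e : ℕ) + 1 else d + 2)) - v ∈ W)
      ↔ ((∃ i j, i ≠ j ∧ a i = a j) ∨ ∑ i, a i = 0) := by
  have : Fact Q.Prime := ⟨hQ⟩
  have hplane := exists_sub_mem_finrank_lt_card_iff fun i => gapCurve d (a i)
  simp only [Fintype.card_fin, Nat.lt_succ_iff] at hplane
  refine (hplane.trans <| (exists_dotProduct_gapCurve_iff a).trans
    (exists_ne_zero_eval_eq_zero_iff a)).trans (or_congr_left ?_)
  rw [Function.not_injective_iff]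
  exact exists₂_congr fun _ _ => and_comm

/-- Let `Q` be prime, `d ≥ 1`, and `f_d : ℤ/Qℤ → (ℤ/Qℤ)^{d+1}` be
`f_d(a) = (a, a², …, a^d, a^{d+2})`. For any `a_1, …, a_{d+2} ∈ ℤ/Qℤ`, the points
`f_d(a_1), …, f_d(a_{d+2})` all lie in some affine subspace of `(ℤ/Qℤ)^{d+1}` of dimension
at most `d` (a coset `v + W` with `dim W ≤ d`) iff `a_i = a_j` for some `i ≠ j`, or
`a_1 + ⋯ + a_{d+2} = 0` in `ℤ/Qℤ`. -/
theorem stmt_17 (Q : ℕ) (hQ : Q.Prime) (d : ℕ) (hd : 1 ≤ d)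
    (a : Fin (d + 2) → ZMod Q) :
    (∃ (v : Fin (d + 1) → ZMod Q) (W : Submodule (ZMod Q) (Fin (d + 1) → ZMod Q)),
        Module.finrank (ZMod Q) W ≤ d ∧
        ∀ i, (fun e : Fin (d + 1) =>
            a i ^ (if (e : ℕ) < d then (e : ℕ) + 1 else d + 2)) - v ∈ W)
      ↔ ((∃ i j, i ≠ j ∧ a i = a j) ∨ ∑ i, a i = 0) :=
  stmt_17_general Q hQ d a
end
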